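/- arXiv:2205.12924 — 6 statements merged into one kernel-verified Lean document; each statement's English description precedes it below -/
import Mathlib

section
/- Let the data X_1, X_2, … be i.i.d. from a finite mixture P = Σ_{j=1}^t p_j R_j with t ≥ 1 components, and let the Dirichlet process mixture model have kernel density k(·|θ), base density q0, and prior π on the concentration parameter satisfying A1 and A2. Define the posterior distribution of α given x_{1:n} as the probability measure on (0,∞) with density proportional to π(α) · Σ_{s=1}^n (α^s/α^{(n)}) Σ_{A={A_1,…,A_s}∈τ_s(n)} ∏_{j=1}^s (|A_j|−1)! m(x_{A_j}). If pr(K_n = t | X_{1:n}) → 1 in probability as n → ∞, then for every ε > 0 the posterior probability pr(α < ε | X_{1:n}) converges to 1 in probability as n → ∞ (i.e., the posterior of α converges weakly to the point mass at 0, in probability). -/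
open MeasureTheory Filter Topology
open scoped Classical BigOperators ENNReal

noncomputable section

/-- A finite set of blocks forming a partition of `Fin n` (i.e. of `{1,…,n}`). -/
def IsPartitionOf {n : ℕ} (P : Finset (Finset (Fin n))) : Prop :=
  (∀ B ∈ P, B.Nonempty) ∧ ∀ i : Fin n, ∃! B : Finset (Fin n), B ∈ P ∧ i ∈ B

/-- `τ_s(n)`: the partitions of `{1,…,n}` into `s` nonempty blocks. -/
def partitionsInto (n s : ℕ) : Finset (Finset (Finset (Fin n))) :=
  Finset.univ.filter fun P => IsPartitionOf P ∧ P.card = s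

/-- Ascending factorial `α^{(n)} = α (α+1) ⋯ (α+n−1)`. -/
def ascFactorial (α : ℝ) (n : ℕ) : ℝ := ∏ i ∈ Finset.range n, (α + (i : ℝ))

/-- Marginal likelihood `m(x_B)` of the observations in block `B`, for kernel `k(·|θ)`
(written `k x θ`) and base density `q0`. -/
def clusterMarginal (k : ℝ → ℝ → ℝ) (q0 : ℝ → ℝ) {n : ℕ} (x : Fin n → ℝ)
    (B : Finset (Fin n)) : ℝ :=
  ∫ θ : ℝ, (∏ i ∈ B, k (x i) θ) * q0 θ

/-- `Σ_{A={A_1,…,A_s}∈τ_s(n)} ∏_j (|A_j|−1)! · m(x_{A_j})`. -/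
def clusterWeight (k : ℝ → ℝ → ℝ) (q0 : ℝ → ℝ) (n s : ℕ) (x : Fin n → ℝ) : ℝ :=
  ∑ P ∈ partitionsInto n s, ∏ B ∈ P, (((B.card - 1).factorial : ℝ) * clusterMarginal k q0 x B)

/-- `∫_0^∞ α^s/α^{(n)} π(α) dα`. -/
def priorCoeff (π : ℝ → ℝ) (n s : ℕ) : ℝ :=
  ∫ α in Set.Ioi (0:ℝ), α ^ s / ascFactorial α n * π α

/-- Unnormalized posterior weight `P_n(s)` on the number of clusters. -/
def Pn (π : ℝ → ℝ) (k : ℝ → ℝ → ℝ) (q0 : ℝ → ℝ) (n s : ℕ) (x : Fin n → ℝ) : ℝ :=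
  priorCoeff π n s * clusterWeight k q0 n s x

/-- Posterior probability `pr(K_n = s | x_{1:n}) = P_n(s)/Σ_{r=1}^n P_n(r)`. -/
def postK (π : ℝ → ℝ) (k : ℝ → ℝ → ℝ) (q0 : ℝ → ℝ) (n s : ℕ) (x : Fin n → ℝ) : ℝ :=
  Pn π k q0 n s x / ∑ r ∈ Finset.Icc 1 n, Pn π k q0 n r x

/-- (A1): `π` is a probability density on `(0,∞)`. -/
def IsPriorDensity (π : ℝ → ℝ) : Prop :=
  Measurable π ∧ (∀ α, 0 ≤ π α) ∧ (∫ α in Set.Ioi (0:ℝ), π α) = 1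

/-- (A2): polynomial behaviour of `π` near the origin, with constants `ε ∈ (0,1)`,
`δ > 0`, `β > 0`. -/
def PolyAtZero (π : ℝ → ℝ) (ε δ β : ℝ) : Prop :=
  ε ∈ Set.Ioo (0:ℝ) 1 ∧ 0 < δ ∧ 0 < β ∧
    ∀ α ∈ Set.Ioo (0:ℝ) ε, δ⁻¹ * α ^ β ≤ π α ∧ π α ≤ δ * α ^ β

/-- (A3): subfactorial moments with parameter `ρ`:
`∫_0^∞ α^s π(α) dα ≤ D ρ^{−s} Γ(ν+s+1)` for all integers `s ≥ 1`. -/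
def SubfactorialMoments (π : ℝ → ℝ) (ρ : ℝ) : Prop :=
  ∃ D ν : ℝ, 0 < D ∧ 0 < ν ∧ ∀ s : ℕ, 1 ≤ s →
    (∫ α in Set.Ioi (0:ℝ), α ^ s * π α) ≤ D * ρ⁻¹ ^ s * Real.Gamma (ν + (s : ℝ) + 1)

/-- A probability density on `ℝ` (w.r.t. Lebesgue measure). -/
def IsDensity (f : ℝ → ℝ) : Prop :=
  Measurable f ∧ (∀ x, 0 ≤ f x) ∧ (∫ x, f x) = 1

/-- `X` is an i.i.d. sequence on `(Ω,μ)` with common density `f` (w.r.t. Lebesgue). -/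
def IsIIDWithDensity (Ω : Type) [MeasurableSpace Ω] (μ : Measure Ω)
    (X : ℕ → Ω → ℝ) (f : ℝ → ℝ) : Prop :=
  (∀ i, Measurable (X i)) ∧
  ProbabilityTheory.iIndepFun X μ ∧
  ∀ i, Measure.map (X i) μ = volume.withDensity fun x => ENNReal.ofReal (f x)

/-- Posterior probability that the concentration parameter is below `ε`:
`pr(α < ε | x_{1:n})`, where the posterior of `α` has density proportional to
`π(α) Σ_{s=1}^n (α^s/α^{(n)}) Σ_{A∈τ_s(n)} ∏_j (|A_j|−1)! m(x_{A_j})` on `(0,∞)`. -/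
def postAlphaBelow (π : ℝ → ℝ) (k : ℝ → ℝ → ℝ) (q0 : ℝ → ℝ) (n : ℕ)
    (x : Fin n → ℝ) (ε : ℝ) : ℝ :=
  (∫ α in Set.Ioo (0:ℝ) ε,
      π α * ∑ s ∈ Finset.Icc 1 n, α ^ s / ascFactorial α n * clusterWeight k q0 n s x) /
  (∫ α in Set.Ioi (0:ℝ),
      π α * ∑ s ∈ Finset.Icc 1 n, α ^ s / ascFactorial α n * clusterWeight k q0 n s x)

/-! The weight `α^t / α^{(n)}` of the `t`-cluster term pushes the posterior of `α` towards `0`: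
for `α ≥ ε` it is at most `1 / (ε + t)^{(n-t)}`, while the prior mass of `(0, η)` contributes at
least a constant times `1 / (η + t)^{(n-t)}` to the `t`-th prior coefficient, and for `η < ε` the
ratio of these ascending factorials tends to `0` by Euler's limit formula for `Γ`. So the
`t`-cluster term puts almost all of its mass on `α < ε`, and the other terms carry at most
`1 - pr(K_n = t | x)` of the posterior mass, which tends to `0` in probability. -/

open Set

theorem setIntegral_Ioo_pos {f : ℝ → ℝ} {a b : ℝ} (hab : a < b) (hf : IntegrableOn f (Ioo a b))
    (hpos : ∀ x ∈ Ioo a b, 0 < f x) : 0 < ∫ x in Ioo a b, f x := by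
  rw [← integral_Ioc_eq_integral_Ioo, ← intervalIntegral.integral_of_le hab.le]
  exact intervalIntegral.intervalIntegral_pos_of_pos_on
    ((intervalIntegrable_iff_integrableOn_Ioo_of_le hab.le).2 hf) hpos hab

theorem MeasureTheory.TendstoInMeasure.of_dist_le_add {Ω ι E : Type*} [MeasurableSpace Ω]
    {μ : Measure Ω} [PseudoMetricSpace E] {l : Filter ι} {f g : ι → Ω → E} {h : Ω → E}
    (hf : TendstoInMeasure μ f l h)
    (hg : ∀ γ > 0, ∀ᶠ i in l, ∀ ω, dist (g i ω) (h ω) ≤ γ + dist (f i ω) (h ω)) :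
    TendstoInMeasure μ g l h := by
  rw [tendstoInMeasure_iff_dist] at hf ⊢
  intro η hη
  refine tendsto_of_tendsto_of_tendsto_of_le_of_le' tendsto_const_nhds (hf (η / 2) (half_pos hη))
    (Eventually.of_forall fun _ => zero_le) ?_
  filter_upwards [hg (η / 2) (half_pos hη)] with i hi
  refine measure_mono fun ω (hω : η ≤ dist (g i ω) (h ω)) => ?_
  show η / 2 ≤ dist (f i ω) (h ω)
  linarith [hi ω]

theorem sum_mul_le_mul_add_sum_sub {ι : Type*} {I : Finset ι} {t : ι} (ht : t ∈ I)
    {a b w : ι → ℝ} (ha : ∀ s ∈ I, 0 ≤ a s) (hw : ∀ s ∈ I, 0 ≤ w s) {γ : ℝ}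
    (htail : b t ≤ γ * (a t + b t)) :
    ∑ s ∈ I, b s * w s ≤ γ * ((a t + b t) * w t)
      + (∑ s ∈ I, (a s + b s) * w s - (a t + b t) * w t) := by
  rw [← Finset.add_sum_erase _ _ ht, ← Finset.add_sum_erase _ (fun s => (a s + b s) * w s) ht,
    add_sub_cancel_left, ← mul_assoc]
  refine add_le_add (mul_le_mul_of_nonneg_right htail (hw t ht)) (Finset.sum_le_sum fun s hs => ?_)
  have hs' := Finset.mem_of_mem_erase hs
  exact mul_le_mul_of_nonneg_right (le_add_of_nonneg_left (ha s hs')) (hw s hs')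

theorem dist_sum_mul_div_sum_le {ι : Type*} {I : Finset ι} {t : ι} (ht : t ∈ I) {a b w : ι → ℝ}
    (ha : ∀ s ∈ I, 0 ≤ a s) (hb : ∀ s ∈ I, 0 ≤ b s) (hw : ∀ s ∈ I, 0 ≤ w s) {γ : ℝ}
    (hγ : 0 ≤ γ) (htail : b t ≤ γ * (a t + b t)) :
    dist ((∑ s ∈ I, a s * w s) / ∑ s ∈ I, (a s + b s) * w s) 1
      ≤ γ + dist ((a t + b t) * w t / ∑ s ∈ I, (a s + b s) * w s) 1 := by
  have hTP := sum_mul_le_mul_add_sum_sub ht ha hw htail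
  set D := ∑ s ∈ I, (a s + b s) * w s
  set N := ∑ s ∈ I, a s * w s
  set T := ∑ s ∈ I, b s * w s
  set P := (a t + b t) * w t
  have hP : ∀ s ∈ I, 0 ≤ (a s + b s) * w s := fun s hs =>
    mul_nonneg (add_nonneg (ha s hs) (hb s hs)) (hw s hs)
  have hNT : N + T = D := by simp only [N, T, D, ← Finset.sum_add_distrib, add_mul]
  have hT : 0 ≤ T := Finset.sum_nonneg fun s hs => mul_nonneg (hb s hs) (hw s hs)
  have hPD : P ≤ D := Finset.single_le_sum hP ht
  have hD : 0 ≤ D := Finset.sum_nonneg hP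
  rcases hD.eq_or_lt with hD | hD
  · rw [← hD, div_zero, div_zero, Real.dist_eq]
    norm_num
    exact hγ
  have hPD1 : P / D ≤ 1 := div_le_one_of_le₀ hPD hD.le
  rw [Real.dist_eq, Real.dist_eq, abs_sub_comm, abs_sub_comm (P / D),
    abs_of_nonneg (sub_nonneg.2 (div_le_one_of_le₀ (by linarith) hD.le)),
    abs_of_nonneg (sub_nonneg.2 hPD1)]
  have hTD : T / D ≤ γ * P / D + (D - P) / D := by
    rw [← add_div]; exact div_le_div_of_nonneg_right hTP hD.le
  have hγPD : γ * P / D ≤ γ := by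
    rw [mul_div_assoc]; exact mul_le_of_le_one_right hγ hPD1
  have hN : 1 - N / D = T / D := by field_simp; linarith
  have hP' : (D - P) / D = 1 - P / D := by field_simp
  linarith

theorem ascFactorial_pos {α : ℝ} (hα : 0 < α) (n : ℕ) : 0 < ascFactorial α n :=
  Finset.prod_pos fun _ _ => by positivity

theorem pow_div_ascFactorial_pos {α : ℝ} (hα : 0 < α) (s n : ℕ) : 0 < α ^ s / ascFactorial α n :=
  div_pos (pow_pos hα s) (ascFactorial_pos hα n)

theorem ascFactorial_add (α : ℝ) (t m : ℕ) :
    ascFactorial α (t + m) = ascFactorial α t * ascFactorial (α + t) m := by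
  simp only [ascFactorial, Finset.prod_range_add, Nat.cast_add, add_assoc]

theorem ascFactorial_le_ascFactorial {a b : ℝ} (ha : 0 ≤ a) (hab : a ≤ b) (n : ℕ) :
    ascFactorial a n ≤ ascFactorial b n :=
  Finset.prod_le_prod (fun _ _ => by positivity) fun _ _ => by gcongr

theorem pow_le_ascFactorial {α : ℝ} (hα : 0 ≤ α) (n : ℕ) : α ^ n ≤ ascFactorial α n :=
  calc α ^ n = ∏ _i ∈ Finset.range n, α := by simp
    _ ≤ ascFactorial α n :=
      Finset.prod_le_prod (fun _ _ => hα) fun i _ => le_add_of_nonneg_right i.cast_nonneg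

theorem one_le_ascFactorial {α : ℝ} (hα : 1 ≤ α) (n : ℕ) : 1 ≤ ascFactorial α n :=
  (one_le_pow₀ hα).trans (pow_le_ascFactorial (by linarith) n)

theorem pow_div_ascFactorial_le_one {α : ℝ} (hα : 0 < α) {s n : ℕ} (hs : 1 ≤ s) (hsn : s ≤ n) :
    α ^ s / ascFactorial α n ≤ 1 := by
  obtain ⟨m, rfl⟩ := Nat.exists_eq_add_of_le hsn
  have hs' : (1 : ℝ) ≤ s := by exact_mod_cast hs
  have hαs : 1 ≤ α + s := by linarith
  rw [div_le_one (ascFactorial_pos hα _), ascFactorial_add]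
  exact (pow_le_ascFactorial hα.le s).trans
    (le_mul_of_one_le_right (ascFactorial_pos hα s).le (one_le_ascFactorial hαs m))

theorem measurable_ascFactorial (n : ℕ) : Measurable fun α => ascFactorial α n := by
  unfold ascFactorial; fun_prop

theorem ascFactorial_succ_eq_div_GammaSeq (s : ℝ) {n : ℕ} (hn : 0 < n) :
    ascFactorial s (n + 1) = (n : ℝ) ^ s * n.factorial / Real.GammaSeq s n := by
  have hnum : (n : ℝ) ^ s * n.factorial ≠ 0 := by positivity
  rw [Real.GammaSeq, div_div_cancel₀ hnum]
  rfl

theorem tendsto_ascFactorial_div_ascFactorial {a b : ℝ} (ha : 0 < a) (hab : a < b) :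
    Tendsto (fun n => ascFactorial a n / ascFactorial b n) atTop (𝓝 0) := by
  rw [← tendsto_add_atTop_iff_nat 1]
  have hpow : Tendsto (fun n : ℕ => (n : ℝ) ^ (-(b - a))) atTop (𝓝 0) :=
    (tendsto_rpow_neg_atTop (sub_pos.2 hab)).comp tendsto_natCast_atTop_atTop
  have hGamma := (Real.GammaSeq_tendsto_Gamma b).div (Real.GammaSeq_tendsto_Gamma a)
    (Real.Gamma_pos_of_pos ha).ne'
  have hlim := hpow.mul hGamma
  rw [zero_mul] at hlim
  refine hlim.congr' ?_
  filter_upwards [eventually_gt_atTop 0] with n hn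
  have hn' : (0 : ℝ) < n := by exact_mod_cast hn
  rw [ascFactorial_succ_eq_div_GammaSeq a hn, ascFactorial_succ_eq_div_GammaSeq b hn,
    Real.rpow_neg hn'.le, Real.rpow_sub hn', Pi.div_apply]
  field_simp

theorem pow_div_ascFactorial_add_le {α : ℝ} (hα : 0 < α) (t m : ℕ) :
    α ^ t / ascFactorial α (t + m) ≤ (ascFactorial (α + t) m)⁻¹ := by
  rw [ascFactorial_add, ← div_div, div_eq_mul_inv]
  exact mul_le_of_le_one_left (inv_nonneg.2 (ascFactorial_pos (by positivity) m).le)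
    ((div_le_one (ascFactorial_pos hα t)).2 (pow_le_ascFactorial hα.le t))

def priorCoeffOn (π : ℝ → ℝ) (n s : ℕ) (S : Set ℝ) : ℝ :=
  ∫ α in S, α ^ s / ascFactorial α n * π α

section PriorCoeff

variable {π : ℝ → ℝ}

theorem IsPriorDensity.integrableOn (hπ : IsPriorDensity π) : IntegrableOn π (Ioi 0) :=
  Integrable.of_integral_ne_zero (hπ.2.2 ▸ one_ne_zero)

theorem IsPriorDensity.integrableOn_pow_div_mul (hπ : IsPriorDensity π) {s n : ℕ} (hs : 1 ≤ s)
    (hsn : s ≤ n) : IntegrableOn (fun α => α ^ s / ascFactorial α n * π α) (Ioi 0) := by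
  refine hπ.integrableOn.bdd_mul (c := 1)
    ((measurable_id.pow_const s).div (measurable_ascFactorial n)).aestronglyMeasurable
    (ae_restrict_of_forall_mem measurableSet_Ioi fun α (hα : 0 < α) => ?_)
  rw [Real.norm_eq_abs, abs_of_nonneg (pow_div_ascFactorial_pos hα s n).le]
  exact pow_div_ascFactorial_le_one hα hs hsn

theorem priorCoeffOn_nonneg (hπ : ∀ α, 0 ≤ π α) (n s : ℕ) {S : Set ℝ} (hS : MeasurableSet S)
    (hSpos : S ⊆ Ioi 0) : 0 ≤ priorCoeffOn π n s S :=
  setIntegral_nonneg hS fun α hα => mul_nonneg (pow_div_ascFactorial_pos (hSpos hα) s n).le (hπ α)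

theorem priorCoeff_eq_add (hπ : IsPriorDensity π) {s n : ℕ} (hs : 1 ≤ s) (hsn : s ≤ n) {ε : ℝ}
    (hε : 0 < ε) :
    priorCoeff π n s = priorCoeffOn π n s (Ioo 0 ε) + priorCoeffOn π n s (Ici ε) := by
  have hint := hπ.integrableOn_pow_div_mul hs hsn
  rw [priorCoeff, ← Ioo_union_Ici_eq_Ioi hε]
  exact setIntegral_union ((Iio_disjoint_Ici le_rfl).mono_left Ioo_subset_Iio_self)
    measurableSet_Ici (hint.mono_set Ioo_subset_Ioi_self) (hint.mono_set (Ici_subset_Ioi.2 hε))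

theorem setIntegral_mul_sum_eq_sum_priorCoeffOn (hπ : IsPriorDensity π) (n : ℕ) (W : ℕ → ℝ)
    {S : Set ℝ} (hS : S ⊆ Ioi 0) :
    ∫ α in S, π α * ∑ s ∈ Finset.Icc 1 n, α ^ s / ascFactorial α n * W s
      = ∑ s ∈ Finset.Icc 1 n, priorCoeffOn π n s S * W s := by
  simp_rw [Finset.mul_sum, priorCoeffOn, ← integral_mul_const]
  rw [integral_finsetSum]
  · exact Finset.sum_congr rfl fun s _ => integral_congr_ae (ae_of_all _ fun α => by ring)
  · intro s hs
    obtain ⟨hs1, hsn⟩ := Finset.mem_Icc.1 hs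
    exact (((hπ.integrableOn_pow_div_mul hs1 hsn).mono_set hS).mul_const (W s)).congr
      (ae_of_all _ fun α => by ring)

theorem priorCoeffOn_Ici_le (hπ : IsPriorDensity π) {ε : ℝ} (hε : 0 < ε) (t m : ℕ) :
    priorCoeffOn π (t + m) t (Ici ε) ≤ (ascFactorial (ε + t) m)⁻¹ := by
  have hsub : Ici ε ⊆ Ioi 0 := Ici_subset_Ioi.2 hε
  have hc : 0 ≤ (ascFactorial (ε + t) m)⁻¹ := inv_nonneg.2 (ascFactorial_pos (by positivity) m).le
  have hmass : ∫ α in Ici ε, π α ≤ 1 :=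
    hπ.2.2 ▸ setIntegral_mono_set hπ.integrableOn
      (ae_restrict_of_forall_mem measurableSet_Ioi fun α _ => hπ.2.1 α) hsub.eventuallyLE
  calc priorCoeffOn π (t + m) t (Ici ε)
      ≤ ∫ α in Ici ε, (ascFactorial (ε + t) m)⁻¹ * π α := by
        refine integral_mono_of_nonneg
          (ae_restrict_of_forall_mem measurableSet_Ici fun α hα => ?_)
          ((hπ.integrableOn.mono_set hsub).const_mul _)
          (ae_restrict_of_forall_mem measurableSet_Ici fun α (hα : ε ≤ α) => ?_)
        · exact mul_nonneg (pow_div_ascFactorial_pos (hε.trans_le hα) t _).le (hπ.2.1 α)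
        · refine mul_le_mul_of_nonneg_right ?_ (hπ.2.1 α)
          exact (pow_div_ascFactorial_add_le (hε.trans_le hα) t m).trans
            (inv_anti₀ (ascFactorial_pos (by positivity) m)
              (ascFactorial_le_ascFactorial (by positivity) (by linarith) m))
    _ = (ascFactorial (ε + t) m)⁻¹ * ∫ α in Ici ε, π α := integral_const_mul _ _
    _ ≤ (ascFactorial (ε + t) m)⁻¹ := mul_le_of_le_one_right hc hmass

theorem setIntegral_Ioo_div_le_priorCoeff (hπ : IsPriorDensity π) {t : ℕ} (ht : 1 ≤ t) {η : ℝ}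
    (hη : 0 < η) (m : ℕ) :
    (∫ α in Ioo 0 η, α ^ t / ascFactorial α t * π α) / ascFactorial (η + t) m
      ≤ priorCoeff π (t + m) t := by
  have hint := hπ.integrableOn_pow_div_mul ht (Nat.le_add_right t m)
  rw [← integral_div]
  calc ∫ α in Ioo 0 η, α ^ t / ascFactorial α t * π α / ascFactorial (η + t) m
      ≤ priorCoeffOn π (t + m) t (Ioo 0 η) := by
        refine integral_mono_of_nonneg
          (ae_restrict_of_forall_mem measurableSet_Ioo fun α hα => ?_)
          (hint.mono_set Ioo_subset_Ioi_self)
          (ae_restrict_of_forall_mem measurableSet_Ioo fun α hα => ?_)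
        · exact div_nonneg (mul_nonneg (pow_div_ascFactorial_pos hα.1 t t).le (hπ.2.1 α))
            (ascFactorial_pos (by positivity) m).le
        · have hsplit : α ^ t / ascFactorial α (t + m) * π α
              = α ^ t / ascFactorial α t * π α / ascFactorial (α + t) m := by
            rw [ascFactorial_add]; ring
          dsimp only
          rw [hsplit]
          exact div_le_div_of_nonneg_left
            (mul_nonneg (pow_div_ascFactorial_pos hα.1 t t).le (hπ.2.1 α))
            (ascFactorial_pos (by linarith [hα.1]) m)
            (ascFactorial_le_ascFactorial (by linarith [hα.1]) (by linarith [hα.2]) m)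
    _ ≤ priorCoeff π (t + m) t :=
        setIntegral_mono_set hint
          (ae_restrict_of_forall_mem measurableSet_Ioi fun α (hα : 0 < α) =>
            mul_nonneg (pow_div_ascFactorial_pos hα t _).le (hπ.2.1 α))
          Ioo_subset_Ioi_self.eventuallyLE

theorem eventually_priorCoeffOn_Ici_le (hπ : IsPriorDensity π) {ε₀ : ℝ}
    (hε₀ : 0 < ε₀) (hpos : ∀ α ∈ Ioo 0 ε₀, 0 < π α) {t : ℕ} (ht : 1 ≤ t) {ε γ : ℝ}
    (hε : 0 < ε) (hγ : 0 < γ) :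
    ∀ᶠ n in atTop, priorCoeffOn π n t (Ici ε) ≤ γ * priorCoeff π n t := by
  obtain ⟨η, hη, hηε₀, hηε⟩ : ∃ η, 0 < η ∧ η < ε₀ ∧ η < ε := by
    obtain ⟨η, hη, hηmin⟩ := exists_between (lt_min hε₀ hε)
    exact ⟨η, hη, lt_min_iff.1 hηmin⟩
  set H := ∫ α in Ioo 0 η, α ^ t / ascFactorial α t * π α
  have hH : 0 < H := setIntegral_Ioo_pos hη
    ((hπ.integrableOn_pow_div_mul ht le_rfl).mono_set Ioo_subset_Ioi_self)
    fun α hα => mul_pos (pow_div_ascFactorial_pos hα.1 t t) (hpos α ⟨hα.1, hα.2.trans hηε₀⟩)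
  have hratio : ∀ᶠ m in atTop, ascFactorial (η + t) m / ascFactorial (ε + t) m ≤ γ * H :=
    (tendsto_ascFactorial_div_ascFactorial (by positivity) (by linarith)).eventually
      (ge_mem_nhds (mul_pos hγ hH))
  filter_upwards [(tendsto_sub_atTop_nat t).eventually hratio, eventually_ge_atTop t]
    with n hn htn
  obtain ⟨m, rfl⟩ := Nat.exists_eq_add_of_le htn
  rw [Nat.add_sub_cancel_left] at hn
  have hAη := ascFactorial_pos (by positivity : 0 < η + t) m
  have hAε := ascFactorial_pos (by positivity : 0 < ε + t) m
  calc priorCoeffOn π (t + m) t (Ici ε) ≤ (ascFactorial (ε + t) m)⁻¹ :=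
        priorCoeffOn_Ici_le hπ hε t m
    _ = (ascFactorial (η + t) m / ascFactorial (ε + t) m / H) * (H / ascFactorial (η + t) m) := by
        field_simp
    _ ≤ γ * priorCoeff π (t + m) t :=
        mul_le_mul ((div_le_iff₀ hH).2 hn) (setIntegral_Ioo_div_le_priorCoeff hπ ht hη m)
          (by positivity) hγ.le

end PriorCoeff

theorem PolyAtZero.pos {π : ℝ → ℝ} {ε δ β : ℝ} (h : PolyAtZero π ε δ β) {α : ℝ}
    (hα : α ∈ Ioo 0 ε) : 0 < π α := by
  obtain ⟨-, hδ, -, hbound⟩ := h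
  exact lt_of_lt_of_le (by have := hα.1; positivity) (hbound α hα).1

theorem clusterWeight_nonneg {k : ℝ → ℝ → ℝ} (hk : ∀ x θ, 0 ≤ k x θ) {q0 : ℝ → ℝ}
    (hq0 : ∀ θ, 0 ≤ q0 θ) (n s : ℕ) (x : Fin n → ℝ) : 0 ≤ clusterWeight k q0 n s x :=
  Finset.sum_nonneg fun _ _ => Finset.prod_nonneg fun _ _ => mul_nonneg (Nat.cast_nonneg _)
    (integral_nonneg fun θ => mul_nonneg (Finset.prod_nonneg fun _ _ => hk _ _) (hq0 θ))

theorem dist_postAlphaBelow_one_le {π : ℝ → ℝ} (hπ : IsPriorDensity π) {k : ℝ → ℝ → ℝ}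
    (hk : ∀ x θ, 0 ≤ k x θ) {q0 : ℝ → ℝ} (hq0 : ∀ θ, 0 ≤ q0 θ) {n t : ℕ}
    (ht : t ∈ Finset.Icc 1 n) {ε γ : ℝ} (hε : 0 < ε) (hγ : 0 ≤ γ)
    (htail : priorCoeffOn π n t (Ici ε) ≤ γ * priorCoeff π n t) (x : Fin n → ℝ) :
    dist (postAlphaBelow π k q0 n x ε) 1 ≤ γ + dist (postK π k q0 n t x) 1 := by
  have hsplit : ∀ s ∈ Finset.Icc 1 n,
      priorCoeff π n s = priorCoeffOn π n s (Ioo 0 ε) + priorCoeffOn π n s (Ici ε) :=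
    fun s hs => priorCoeff_eq_add hπ (Finset.mem_Icc.1 hs).1 (Finset.mem_Icc.1 hs).2 hε
  have hpost : postAlphaBelow π k q0 n x ε =
      (∑ s ∈ Finset.Icc 1 n, priorCoeffOn π n s (Ioo 0 ε) * clusterWeight k q0 n s x) /
        ∑ s ∈ Finset.Icc 1 n, priorCoeff π n s * clusterWeight k q0 n s x := by
    rw [postAlphaBelow, setIntegral_mul_sum_eq_sum_priorCoeffOn hπ n _ Ioo_subset_Ioi_self,
      setIntegral_mul_sum_eq_sum_priorCoeffOn hπ n _ subset_rfl]
    rfl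
  rw [hpost, postK]
  simp only [Pn]
  rw [Finset.sum_congr rfl fun s hs => congrArg (· * _) (hsplit s hs), hsplit t ht]
  refine dist_sum_mul_div_sum_le ht ?_ ?_ (fun s _ => clusterWeight_nonneg hk hq0 n s x) hγ ?_
  · exact fun s _ => priorCoeffOn_nonneg hπ.2.1 n s measurableSet_Ioo Ioo_subset_Ioi_self
  · exact fun s _ => priorCoeffOn_nonneg hπ.2.1 n s measurableSet_Ici
      (Ici_subset_Ioi.2 hε)
  · rwa [← hsplit t ht]

theorem dpm_posterior_alpha_degenerates_at_zero_general
    (k : ℝ → ℝ → ℝ)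
    (hknn : ∀ x θ, 0 ≤ k x θ)
    (q0 : ℝ → ℝ) (hq0 : IsDensity q0)
    (π : ℝ → ℝ) (hA1 : IsPriorDensity π) (hA2 : ∃ ε δ β : ℝ, PolyAtZero π ε δ β)
    (t : ℕ) (ht : 1 ≤ t)
    (Ω : Type) [MeasurableSpace Ω] (μ : Measure Ω)
    (X : ℕ → Ω → ℝ)
    (hcons : TendstoInMeasure μ
      (fun n ω => postK π k q0 n t (fun i : Fin n => X i ω)) atTop (fun _ => 1)) :
    ∀ ε : ℝ, 0 < ε →
      TendstoInMeasure μ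
        (fun n ω => postAlphaBelow π k q0 n (fun i : Fin n => X i ω) ε)
        atTop (fun _ => 1) := by
  intro ε hε
  obtain ⟨ε₀, δ, β, hA2⟩ := hA2
  refine hcons.of_dist_le_add fun γ hγ => ?_
  filter_upwards [eventually_priorCoeffOn_Ici_le hA1 hA2.1.1 (fun _ => hA2.pos) ht hε hγ,
    eventually_ge_atTop t] with n htail htn ω
  exact dist_postAlphaBelow_one_le hA1 hknn hq0.2.1 (Finset.mem_Icc.2 ⟨ht, htn⟩) hε hγ.le htail _

/-- Proposition 2 of the paper.
If the data are i.i.d. from a finite mixture `Σ_{j=1}^t p_j R_j` with `t` distinct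
components and the posterior of the number of clusters is consistent at `t`, then the
posterior of the concentration parameter `α` converges weakly to `δ_0` in probability,
i.e. `pr(α < ε | X_{1:n}) → 1` in probability for every `ε > 0`. -/
theorem dpm_posterior_alpha_degenerates_at_zero
    (k : ℝ → ℝ → ℝ) (hkmeas : Measurable (Function.uncurry k))
    (hknn : ∀ x θ, 0 ≤ k x θ)
    (q0 : ℝ → ℝ) (hq0 : IsDensity q0)
    (π : ℝ → ℝ) (hA1 : IsPriorDensity π) (hA2 : ∃ ε δ β : ℝ, PolyAtZero π ε δ β)
    (t : ℕ) (ht : 1 ≤ t) (p : Fin t → ℝ) (hp : ∀ j, p j ∈ Set.Ioo (0:ℝ) 1)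
    (hpsum : ∑ j, p j = 1)
    (R : Fin t → Measure ℝ) (hR : ∀ j, IsProbabilityMeasure (R j))
    (hRdist : ∀ j l, j ≠ l → R j ≠ R l)
    (Ω : Type) [MeasurableSpace Ω] (μ : Measure Ω) [IsProbabilityMeasure μ]
    (X : ℕ → Ω → ℝ) (hXm : ∀ i, Measurable (X i))
    (hXindep : ProbabilityTheory.iIndepFun X μ)
    (hXlaw : ∀ i, Measure.map (X i) μ = ∑ j, ENNReal.ofReal (p j) • R j)
    (hcons : TendstoInMeasure μ
      (fun n ω => postK π k q0 n t (fun i : Fin n => X i ω)) atTop (fun _ => 1)) :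
    ∀ ε : ℝ, 0 < ε →
      TendstoInMeasure μ
        (fun n ω => postAlphaBelow π k q0 n (fun i : Fin n => X i ω) ε)
        atTop (fun _ => 1) :=
  dpm_posterior_alpha_degenerates_at_zero_general k hknn q0 hq0 π hA1 hA2 t ht Ω μ X hcons
end
end

section
/- Let π be the Generalized Gamma density on (0,∞), π(α) = (p/(a^d Γ(d/p))) · α^{d−1} e^{−(α/a)^p}, with parameters a, d > 0 and p > 1. Then for every ρ > 0 there exists D > 0 such that ∫_0^∞ α^s π(α) dα ≤ D ρ^{−s} Γ(s + d) for every integer s ≥ 1. In particular, π satisfies assumption A3 for every ρ > 0. -/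
/-!
Let `q` be the conjugate exponent of `p`. Young's inequality gives `ρα ≤ (α/a)^p + (ρa)^q`, so the
Generalized Gamma tail `exp (-(α/a)^p)` is dominated by `exp ((ρa)^q) · exp (-ρα)` for every
`ρ > 0`. Integrating `α^(s+d-1)` against the exponential yields `ρ^(-(s+d)) Γ(s+d)`, and the
constant `exp ((ρa)^q)` does not depend on `s`. Since `Γ x ≤ Γ (x+1)` for `x ≥ 1`, this is (A3)
with `ν = d`.
-/

open MeasureTheory Filter Topology
open scoped Classical BigOperators ENNReal

noncomputable section

section

open Real Set

lemma Real.mul_le_rpow_add_rpow_conjExponent {p x y : ℝ} (hp : 1 < p) (hx : 0 ≤ x) (hy : 0 ≤ y) :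
    x * y ≤ x ^ p + y ^ p.conjExponent := by
  have hpq := HolderConjugate.conjExponent hp
  calc x * y ≤ x ^ p / p + y ^ p.conjExponent / p.conjExponent :=
        young_inequality_of_nonneg hx hy hpq
    _ ≤ x ^ p + y ^ p.conjExponent :=
        add_le_add (div_le_self (by positivity) hp.le) (div_le_self (by positivity) hpq.symm.lt.le)

lemma Real.exp_neg_div_rpow_le {a p ρ α : ℝ} (ha : 0 < a) (hp : 1 < p) (hρ : 0 ≤ ρ)
    (hα : 0 ≤ α) :
    exp (-(α / a) ^ p) ≤ exp ((ρ * a) ^ p.conjExponent) * exp (-(ρ * α)) := by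
  rw [← exp_add, exp_le_exp]
  have young := mul_le_rpow_add_rpow_conjExponent hp (div_nonneg hα ha.le) (mul_nonneg hρ ha.le)
  have hprod : α / a * (ρ * a) = ρ * α := by field_simp
  linarith

lemma Real.setIntegral_rpow_mul_exp_neg_div_rpow_le {a p ρ t : ℝ} (ha : 0 < a) (hp : 1 < p)
    (hρ : 0 < ρ) (ht : 0 < t) :
    ∫ α in Ioi 0, α ^ (t - 1) * exp (-(α / a) ^ p) ≤
      exp ((ρ * a) ^ p.conjExponent) * (ρ⁻¹ ^ t * Gamma t) := by
  have hdom : IntegrableOn (fun α : ℝ ↦ α ^ (t - 1) * exp (-(ρ * α))) (Ioi 0) := by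
    simpa only [rpow_one, neg_mul] using
      integrableOn_rpow_mul_exp_neg_mul_rpow (s := t - 1) (by linarith) one_pos hρ
  calc ∫ α in Ioi 0, α ^ (t - 1) * exp (-(α / a) ^ p)
      ≤ ∫ α in Ioi 0, exp ((ρ * a) ^ p.conjExponent) * (α ^ (t - 1) * exp (-(ρ * α))) := by
        refine setIntegral_mono_of_nonneg (fun α hα ↦ ?_) (fun α hα ↦ ?_) (hdom.const_mul _)
        · have := rpow_nonneg (le_of_lt hα) (t - 1)
          positivity
        · rw [mul_left_comm]
          exact mul_le_mul_of_nonneg_left (exp_neg_div_rpow_le ha hp hρ.le (le_of_lt hα))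
            (rpow_nonneg (le_of_lt hα) _)
    _ = exp ((ρ * a) ^ p.conjExponent) * (ρ⁻¹ ^ t * Gamma t) := by
        rw [integral_const_mul, integral_rpow_mul_exp_neg_mul_Ioi ht hρ, one_div]

lemma Real.Gamma_le_Gamma_add_one {x : ℝ} (hx : 1 ≤ x) : Gamma x ≤ Gamma (x + 1) := by
  rw [Gamma_add_one (by positivity)]
  exact le_mul_of_one_le_left (Gamma_pos_of_pos (by linarith)).le hx

theorem generalizedGamma_moment_le {a d p ρ : ℝ} (ha : 0 < a) (hd : 0 < d) (hp : 1 < p)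
    (hρ : 0 < ρ) {f : ℝ → ℝ}
    (hf : ∀ α ∈ Ioi (0 : ℝ),
      f α = p / (a ^ d * Gamma (d / p)) * (α ^ (d - 1) * exp (-(α / a) ^ p))) (s : ℕ) :
    ∫ α in Ioi 0, α ^ s * f α ≤
      p / (a ^ d * Gamma (d / p)) * exp ((ρ * a) ^ p.conjExponent) * ρ⁻¹ ^ d * ρ⁻¹ ^ s *
        Gamma (s + d) := by
  have hC : 0 ≤ p / (a ^ d * Gamma (d / p)) := by positivity
  have hmoment : ∫ α in Ioi 0, α ^ s * f α =
      p / (a ^ d * Gamma (d / p)) * ∫ α in Ioi 0, α ^ ((s + d) - 1) * exp (-(α / a) ^ p) := by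
    rw [← integral_const_mul]
    refine setIntegral_congr_fun measurableSet_Ioi fun α hα ↦ ?_
    rw [hf α hα, add_sub_assoc, rpow_add hα, rpow_natCast]
    ring
  rw [hmoment]
  calc _ ≤ p / (a ^ d * Gamma (d / p)) *
        (exp ((ρ * a) ^ p.conjExponent) * (ρ⁻¹ ^ ((s : ℝ) + d) * Gamma (s + d))) :=
        mul_le_mul_of_nonneg_left (setIntegral_rpow_mul_exp_neg_div_rpow_le ha hp hρ
          (by positivity)) hC
    _ = _ := by
        rw [rpow_add (by positivity), rpow_natCast]
        ring

end

/-- part of Lemma 1 of the paper.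
The Generalized Gamma density `π(α) ∝ α^{d−1} e^{−(α/a)^p}` on `(0,∞)` with `p > 1`
satisfies, for every `ρ > 0`, `∫_0^∞ α^s π(α) dα ≤ D ρ^{−s} Γ(s+d)` for all integers
`s ≥ 1` and some `D > 0`; in particular it satisfies assumption (A3) for every `ρ > 0`. -/
theorem generalized_gamma_has_subfactorial_moments
    (a d p : ℝ) (ha : 0 < a) (hd : 0 < d) (hp : 1 < p)
    (π : ℝ → ℝ)
    (hπ : ∀ α ∈ Set.Ioi (0:ℝ),
      π α = p / (a ^ d * Real.Gamma (d / p)) * (α ^ (d - 1) * Real.exp (-(α / a) ^ p))) :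
    (∀ ρ : ℝ, 0 < ρ → ∃ D : ℝ, 0 < D ∧ ∀ s : ℕ, 1 ≤ s →
        (∫ α in Set.Ioi (0:ℝ), α ^ s * π α) ≤ D * ρ⁻¹ ^ s * Real.Gamma ((s : ℝ) + d)) ∧
    (∀ ρ : ℝ, 0 < ρ → SubfactorialMoments π ρ) := by
  have moments : ∀ ρ : ℝ, 0 < ρ → ∃ D : ℝ, 0 < D ∧ ∀ s : ℕ, 1 ≤ s →
      (∫ α in Set.Ioi (0:ℝ), α ^ s * π α) ≤ D * ρ⁻¹ ^ s * Real.Gamma ((s : ℝ) + d) :=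
    fun ρ hρ ↦ ⟨_, by positivity, fun s _ ↦ generalizedGamma_moment_le ha hd hp hρ hπ s⟩
  refine ⟨moments, fun ρ hρ ↦ ?_⟩
  obtain ⟨D, hD, hmoments⟩ := moments ρ hρ
  refine ⟨D, d, hD, hd, fun s hs ↦ (hmoments s hs).trans ?_⟩
  have hs' : (1 : ℝ) ≤ s := by exact_mod_cast hs
  rw [show d + (s : ℝ) + 1 = s + d + 1 by ring]
  gcongr
  exact Real.Gamma_le_Gamma_add_one (by linarith)
end
end

section
/- Let (X_1, X_2, …) be an exchangeable sequence of real random variables, i.e., for every n and every permutation σ of {1,…,n}, the joint law of (X_{σ(1)},…,X_{σ(n)}) equals that of (X_1,…,X_n). Let k(·|θ) ≥ 0 be a jointly measurable kernel, q0 a density on ℝ, and for a block A ⊆ {1,…,n} let m(x_A) = ∫_ℝ ∏_{i∈A} k(x_i|θ) q0(θ) dθ, assuming m(X_{1:n}) > 0 almost surely. Then for every 1 ≤ s ≤ n, E[ Σ_{A={A_1,…,A_s}∈τ_s(n)} (∏_{j=1}^s (|A_j|−1)!/(n−1)!) · ∏_{j=1}^s m(X_{A_j})/m(X_{1:n}) ]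 = Σ_{a∈𝓕_s(n)} (n/(s! ∏_{j=1}^s a_j)) · E[ ∏_{j=1}^s m(X_{A_j^a})/m(X_{1:n}) ], where 𝓕_s(n) = {a ∈ {1,…,n}^s : Σ_{j=1}^s a_j = n}, A^a is any fixed partition in τ_s(n) with |A_j^a| = a_j for each j, and the equality holds in [0,∞]. -/
/-!
By linearity of the integral the left side is `∑_P w(P) E[R_P]`, and exchangeability makes
`E[R_P]` invariant under relabelling the blocks of `P` by a permutation of `{1,…,n}`.
Double count the pairs `(a, σ)` of a composition and a permutation: the ordered partition
`σ(A^a)` has block sizes `a`, each ordered partition with block sizes `b` arises from exactly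
`∏ b_j!` such pairs (a coset of the stabilizer of `A^b`), and each partition has `s!` orderings.
Hence for an invariant `f`, `s! ∑_P f(P) = ∑_a (n! / ∏ a_j!) f(A^a)`, and the weights combine as
`(n! / ∏ a_j!) · ∏ (a_j - 1)! / (n - 1)! = n / ∏ a_j`.
-/

open MeasureTheory Filter Topology
open scoped Classical BigOperators ENNReal

noncomputable section

/-- `𝓕_s(n)`: the compositions of `n` into `s` positive integer parts. -/
def compositions (n s : ℕ) : Finset (Fin s → ℕ) :=
  (Fintype.piFinset fun _ : Fin s => Finset.Icc 1 n).filter fun a => ∑ j, a j = n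

open Finset Equiv
open scoped Nat

theorem Equiv.Perm.card_comp_eq {α ι : Type*} [Fintype α] [DecidableEq α] [Fintype ι]
    [DecidableEq ι] {c d : α → ι}
    (h : ∀ j, Fintype.card {i // c i = j} = Fintype.card {i // d i = j}) :
    Fintype.card {σ : Perm α // d ∘ σ = c} = ∏ j, (Fintype.card {i // c i = j})! := by
  -- `{σ // d ∘ σ = c}` is a coset of the stabilizer of `c`, through any `σ₀` in it.
  let σ₀ : Perm α := ofFiberEquiv fun j => Fintype.equivOfCardEq (h j)
  have hσ₀ : d ∘ σ₀ = c := funext (ofFiberEquiv_map _)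
  rw [← DomMulAct.stabilizer_card c]
  refine Fintype.card_congr (subtypeEquiv (Equiv.mulLeft σ₀⁻¹) fun σ => ?_)
  rw [← hσ₀]
  simp only [funext_iff, Function.comp_apply, Perm.mul_apply, coe_mulLeft,
    Perm.coe_inv, apply_symm_apply]

section OrderedPartitions

variable {n s : ℕ}

theorem sum_card_eq_iff_forall_exists_mem {π : Fin s → Finset (Fin n)}
    (hπ : Pairwise fun j l => Disjoint (π j) (π l)) :
    ∑ j, (π j).card = n ↔ ∀ i, ∃ j, i ∈ π j := by
  have hunion := card_eq_iff_eq_univ (univ.biUnion π)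
  rw [Fintype.card_fin] at hunion
  rw [← card_biUnion fun j _ l _ hjl => hπ hjl, hunion, eq_univ_iff_forall]
  simp

theorem injective_of_image_eq {π : Fin s → Finset (Fin n)} {P : Finset (Finset (Fin n))}
    (hP : P.card = s) (hπP : univ.image π = P) : Function.Injective π := by
  have hcard : #(univ.image π) = #(univ : Finset (Fin s)) := by
    rw [hπP, hP, card_univ, Fintype.card_fin]
  simpa using card_image_iff.1 hcard

structure IsOrderedPartition (π : Fin s → Finset (Fin n)) : Prop where
  nonempty : ∀ j, (π j).Nonempty
  pairwise_disjoint : Pairwise fun j l => Disjoint (π j) (π l)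
  exists_mem : ∀ i, ∃ j, i ∈ π j

def orderedPartitions (n s : ℕ) : Finset (Fin s → Finset (Fin n)) :=
  univ.filter IsOrderedPartition

namespace IsOrderedPartition

variable {π : Fin s → Finset (Fin n)}

theorem injective (hπ : IsOrderedPartition π) : Function.Injective π := by
  intro j l hjl
  by_contra hne
  obtain ⟨i, hi⟩ := hπ.nonempty l
  exact disjoint_left.1 (hπ.pairwise_disjoint hne) (hjl ▸ hi) hi

theorem sum_card (hπ : IsOrderedPartition π) : ∑ j, (π j).card = n :=
  (sum_card_eq_iff_forall_exists_mem hπ.pairwise_disjoint).2 hπ.exists_mem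

theorem card_mem_compositions (hπ : IsOrderedPartition π) :
    (fun j => (π j).card) ∈ compositions n s := by
  refine mem_filter.2 ⟨Fintype.mem_piFinset.2 fun j => mem_Icc.2 ⟨?_, ?_⟩, hπ.sum_card⟩
  · exact card_pos.2 (hπ.nonempty j)
  · simpa using card_le_univ (π j)

theorem image_mem_partitionsInto (hπ : IsOrderedPartition π) :
    univ.image π ∈ partitionsInto n s := by
  refine mem_filter.2 ⟨mem_univ _, ⟨?_, fun i => ?_⟩, ?_⟩
  · simpa using hπ.nonempty
  · obtain ⟨j, hj⟩ := hπ.exists_mem i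
    refine ⟨π j, ⟨mem_image_of_mem π (mem_univ j), hj⟩, ?_⟩
    rintro _ ⟨hB, hiB⟩
    obtain ⟨l, -, rfl⟩ := mem_image.1 hB
    by_contra hne
    exact disjoint_left.1 (hπ.pairwise_disjoint fun h => hne (congrArg π h)) hiB hj
  · rw [card_image_of_injective _ hπ.injective, card_univ, Fintype.card_fin]

theorem image_perm (hπ : IsOrderedPartition π) (σ : Perm (Fin n)) :
    IsOrderedPartition fun j => (π j).image σ where
  nonempty j := (hπ.nonempty j).image σ
  pairwise_disjoint j l hjl := (disjoint_image σ.injective).2 (hπ.pairwise_disjoint hjl)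
  exists_mem i := by
    obtain ⟨j, hj⟩ := hπ.exists_mem (σ⁻¹ i)
    exact ⟨j, mem_image.2 ⟨σ⁻¹ i, hj, by simp⟩⟩

theorem of_mem_compositions {a : Fin s → ℕ} (ha : a ∈ compositions n s)
    (hcard : ∀ j, (π j).card = a j) (hdisj : ∀ j l, j ≠ l → Disjoint (π j) (π l)) :
    IsOrderedPartition π := by
  obtain ⟨ha_mem, ha_sum⟩ := mem_filter.1 ha
  refine ⟨fun j => card_pos.1 ?_, fun j l => hdisj j l,
    (sum_card_eq_iff_forall_exists_mem fun j l => hdisj j l).1 ?_⟩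
  · rw [hcard j]
    exact (mem_Icc.1 (Fintype.mem_piFinset.1 ha_mem j)).1
  · simp only [hcard, ha_sum]

theorem of_image_eq {P : Finset (Finset (Fin n))} (hP : P ∈ partitionsInto n s)
    (hπP : univ.image π = P) : IsOrderedPartition π := by
  obtain ⟨hPpart, hPcard⟩ := (mem_filter.1 hP).2
  have hmem : ∀ j, π j ∈ P := fun j => hπP ▸ mem_image_of_mem π (mem_univ j)
  have hinj : Function.Injective π := injective_of_image_eq hPcard hπP
  refine ⟨fun j => hPpart.1 _ (hmem j), fun j l hjl => disjoint_left.2 fun i hij hil => ?_,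
    fun i => ?_⟩
  · exact hjl (hinj ((hPpart.2 i).unique ⟨hmem j, hij⟩ ⟨hmem l, hil⟩))
  · obtain ⟨B, ⟨hB, hiB⟩, -⟩ := hPpart.2 i
    obtain ⟨j, -, rfl⟩ := mem_image.1 (hπP ▸ hB)
    exact ⟨j, hiB⟩

def blockIndex (hπ : IsOrderedPartition π) (i : Fin n) : Fin s := (hπ.exists_mem i).choose

theorem blockIndex_eq_iff (hπ : IsOrderedPartition π) {i : Fin n} {j : Fin s} :
    hπ.blockIndex i = j ↔ i ∈ π j := by
  have hmem : i ∈ π (hπ.blockIndex i) := (hπ.exists_mem i).choose_spec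
  refine ⟨fun h => h ▸ hmem, fun hj => ?_⟩
  by_contra hne
  exact disjoint_left.1 (hπ.pairwise_disjoint hne) hmem hj

theorem card_blockIndex_eq (hπ : IsOrderedPartition π) (j : Fin s) :
    Fintype.card {i // hπ.blockIndex i = j} = (π j).card := by
  simp_rw [hπ.blockIndex_eq_iff, Fintype.card_coe]

theorem image_perm_eq_iff {A : Fin s → Finset (Fin n)} (hA : IsOrderedPartition A)
    (hπ : IsOrderedPartition π) (hcard : ∀ j, (A j).card = (π j).card) (σ : Perm (Fin n)) :
    (fun j => (A j).image σ) = π ↔ hπ.blockIndex ∘ σ = hA.blockIndex := by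
  constructor
  · rintro hσ
    ext1 i
    rw [Function.comp_apply, hπ.blockIndex_eq_iff, ← hσ]
    exact mem_image_of_mem σ ((hA.blockIndex_eq_iff).1 rfl)
  · intro hσ
    ext1 j
    refine eq_of_subset_of_card_le (fun x hx => ?_) ?_
    · obtain ⟨i, hi, rfl⟩ := mem_image.1 hx
      rw [← hπ.blockIndex_eq_iff, ← Function.comp_apply (f := hπ.blockIndex), hσ,
        hA.blockIndex_eq_iff]
      exact hi
    · rw [card_image_of_injective _ σ.injective, hcard]

theorem card_image_perm_eq {A : Fin s → Finset (Fin n)} (hA : IsOrderedPartition A)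
    (hπ : IsOrderedPartition π) (hcard : ∀ j, (A j).card = (π j).card) :
    #{σ : Perm (Fin n) | (fun j => (A j).image σ) = π} = ∏ j, (A j).card ! := by
  simp_rw [hA.image_perm_eq_iff hπ hcard, ← Fintype.card_subtype]
  rw [Perm.card_comp_eq fun j => by rw [hA.card_blockIndex_eq, hπ.card_blockIndex_eq, hcard]]
  simp_rw [hA.card_blockIndex_eq]

end IsOrderedPartition

theorem card_filter_image_eq {P : Finset (Finset (Fin n))} (hP : P.card = s) :
    #{π : Fin s → Finset (Fin n) | univ.image π = P} = s ! := by
  have hcardP : Fintype.card P = Fintype.card (Fin s) := by simp [hP]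
  have hfilter : (univ.filter fun π : Fin s → Finset (Fin n) => univ.image π = P) =
      univ.map ⟨fun e : Fin s ≃ P => fun j => (e j : Finset (Fin n)), fun ⦃e e'⦄ h =>
        Equiv.ext fun j => Subtype.ext (congrFun h j)⟩ := by
    ext π
    simp only [mem_filter, mem_univ, true_and, Finset.mem_map]
    constructor
    · intro hπP
      have hmem : ∀ j, π j ∈ P := fun j => hπP ▸ mem_image_of_mem π (mem_univ j)
      have hinj : Function.Injective π := injective_of_image_eq hP hπP
      have hbij : Function.Bijective fun j => (⟨π j, hmem j⟩ : P) :=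
        (Fintype.bijective_iff_injective_and_card _).2
          ⟨fun j l h => hinj (congrArg Subtype.val h), hcardP.symm⟩
      exact ⟨Equiv.ofBijective _ hbij, rfl⟩
    · rintro ⟨e, rfl⟩
      ext B
      simp only [mem_image, mem_univ, true_and]
      exact ⟨fun ⟨j, hj⟩ => hj ▸ (e j).2,
        fun hB => ⟨e.symm ⟨B, hB⟩, congrArg Subtype.val (e.apply_symm_apply ⟨B, hB⟩)⟩⟩
  rw [hfilter, card_map, card_univ, Fintype.card_equiv (Fintype.equivOfCardEq hcardP.symm),
    Fintype.card_fin]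

end OrderedPartitions

section DoubleCounting

variable {n s : ℕ} {M : Type*} [AddCommMonoid M]

theorem sum_orderedPartitions_image (F : Finset (Finset (Fin n)) → M) :
    ∑ π ∈ orderedPartitions n s, F (univ.image π) = s ! • ∑ P ∈ partitionsInto n s, F P := by
  rw [← sum_fiberwise_of_maps_to (g := fun π => univ.image π)
    fun π hπ => (mem_filter.1 hπ).2.image_mem_partitionsInto, smul_sum]
  refine sum_congr rfl fun P hP => ?_
  have hfiber : (orderedPartitions n s).filter (fun π => univ.image π = P) =
      univ.filter fun π : Fin s → Finset (Fin n) => univ.image π = P := by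
    ext π
    simp only [orderedPartitions, mem_filter, mem_univ, true_and, and_iff_right_iff_imp]
    exact IsOrderedPartition.of_image_eq hP
  rw [sum_congr rfl fun π hπ => by rw [(mem_filter.1 hπ).2], sum_const, hfiber,
    card_filter_image_eq (mem_filter.1 hP).2.2]

variable (A : (Fin s → ℕ) → Fin s → Finset (Fin n))

theorem sum_compositions_sum_perm (hA : ∀ a ∈ compositions n s, IsOrderedPartition (A a))
    (hAcard : ∀ a ∈ compositions n s, ∀ j, (A a j).card = a j)
    (g : (Fin s → Finset (Fin n)) → M) :
    ∑ a ∈ compositions n s, ∑ σ : Perm (Fin n), g (fun j => (A a j).image σ) =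
      ∑ π ∈ orderedPartitions n s, (∏ j, (π j).card !) • g π := by
  let Φ : (Fin s → ℕ) × Perm (Fin n) → Fin s → Finset (Fin n) :=
    fun p j => (A p.1 j).image p.2
  rw [← sum_product', ← sum_fiberwise_of_maps_to (g := Φ) fun p hp =>
    mem_filter.2 ⟨mem_univ _, (hA p.1 (mem_product.1 hp).1).image_perm p.2⟩]
  refine sum_congr rfl fun π hπ => ?_
  replace hπ : IsOrderedPartition π := (mem_filter.1 hπ).2
  let b := fun j => (π j).card
  have hb : b ∈ compositions n s := hπ.card_mem_compositions
  -- the block sizes of `Φ (a, σ)` are `a`, so only `a = b` contributes to the fiber over `π`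
  have hfiber : (compositions n s ×ˢ univ).filter (fun p => Φ p = π) =
      {b} ×ˢ univ.filter fun σ : Perm (Fin n) => (fun j => (A b j).image σ) = π := by
    ext ⟨a, σ⟩
    simp only [mem_filter, mem_product, mem_univ, and_true, mem_singleton, true_and, Φ]
    constructor
    · rintro ⟨ha, hσ⟩
      have hab : a = b := funext fun j => by
        rw [← hAcard a ha j, ← card_image_of_injective _ σ.injective]
        exact congrArg card (congrFun hσ j)
      subst hab
      exact ⟨rfl, hσ⟩
    · rintro ⟨rfl, hσ⟩
      exact ⟨hb, hσ⟩
  rw [sum_congr rfl fun p hp => congrArg g (mem_filter.1 hp).2, sum_const, hfiber, card_product,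
    card_singleton, one_mul, (hA b hb).card_image_perm_eq hπ (hAcard b hb)]
  simp_rw [hAcard b hb, b]

end DoubleCounting

theorem ENNReal.nsmul_ofReal_mul (m : ℕ) (x : ℝ) (y : ℝ≥0∞) :
    m • (ENNReal.ofReal x * y) = ENNReal.ofReal (m * x) * y := by
  rw [nsmul_eq_mul, ← mul_assoc, ENNReal.ofReal_mul (Nat.cast_nonneg m), ENNReal.ofReal_natCast]

theorem prod_factorial_pred_div {s : ℕ} (b : Fin s → ℕ) (hb : ∀ j, 1 ≤ b j) (m : ℕ) :
    (∏ j, ((b j - 1)! : ℝ)) / m ! = (∏ j, (b j)! : ℕ) * ((m ! * ∏ j, b j : ℕ) : ℝ)⁻¹ := by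
  have hfact : ∏ j, (b j)! = (∏ j, b j) * ∏ j, (b j - 1)! := by
    rw [← prod_mul_distrib]
    exact prod_congr rfl fun j _ => (Nat.mul_factorial_pred (by have := hb j; omega)).symm
  have hprod : (∏ j, b j : ℝ) ≠ 0 := prod_ne_zero_iff.2 fun j _ => by have := hb j; positivity
  rw [hfact]
  push_cast
  field_simp

theorem factorial_mul_inv_eq {s n : ℕ} (hn : 1 ≤ n) (a : Fin s → ℕ) :
    (n ! : ℝ) * (((n - 1)! * ∏ j, a j : ℕ) : ℝ)⁻¹ = s ! * (n / (s ! * ∏ j, (a j : ℝ))) := by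
  rw [← Nat.mul_factorial_pred (by omega : n ≠ 0)]
  push_cast
  field_simp

theorem sum_partitionsInto_eq_sum_compositions {n s : ℕ} (hs : 1 ≤ s)
    (A : (Fin s → ℕ) → Fin s → Finset (Fin n))
    (hA : ∀ a ∈ compositions n s, IsOrderedPartition (A a))
    (hAcard : ∀ a ∈ compositions n s, ∀ j, (A a j).card = a j)
    (f : Finset (Finset (Fin n)) → ℝ≥0∞)
    (hf : ∀ (σ : Perm (Fin n)) P, f (P.image fun B => B.image σ) = f P) :
    ∑ P ∈ partitionsInto n s,
        ENNReal.ofReal ((∏ B ∈ P, ((B.card - 1)! : ℝ)) / (n - 1)!) * f P =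
      ∑ a ∈ compositions n s,
        ENNReal.ofReal (n / (s ! * ∏ j, (a j : ℝ))) * f (univ.image (A a)) := by
  let g : (Fin s → Finset (Fin n)) → ℝ≥0∞ := fun π =>
    ENNReal.ofReal (((n - 1)! * ∏ j, (π j).card : ℕ) : ℝ)⁻¹ * f (univ.image π)
  have hg : ∀ a ∈ compositions n s, ∀ σ : Perm (Fin n), g (fun j => (A a j).image σ) =
      ENNReal.ofReal (((n - 1)! * ∏ j, a j : ℕ) : ℝ)⁻¹ * f (univ.image (A a)) := by
    intro a ha σ
    have himage : univ.image (fun j => (A a j).image σ) =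
        (univ.image (A a)).image fun B => B.image σ := by
      rw [image_image]; rfl
    simp only [g, card_image_of_injective _ σ.injective, hAcard a ha, himage, hf]
  rw [← ENNReal.mul_right_inj (a := s !) (by positivity) (ENNReal.natCast_ne_top _),
    ← nsmul_eq_mul, ← sum_orderedPartitions_image]
  calc ∑ π ∈ orderedPartitions n s, ENNReal.ofReal
          ((∏ B ∈ univ.image π, ((B.card - 1)! : ℝ)) / (n - 1)!) * f (univ.image π)
      = ∑ π ∈ orderedPartitions n s, (∏ j, (π j).card !) • g π := by
        refine sum_congr rfl fun π hπ => ?_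
        replace hπ : IsOrderedPartition π := (mem_filter.1 hπ).2
        rw [ENNReal.nsmul_ofReal_mul, prod_image fun j _ l _ h => hπ.injective h,
          prod_factorial_pred_div _ fun j => card_pos.2 (hπ.nonempty j)]
    _ = ∑ a ∈ compositions n s, ∑ σ : Perm (Fin n), g (fun j => (A a j).image σ) :=
        (sum_compositions_sum_perm A hA hAcard g).symm
    _ = ∑ a ∈ compositions n s, n ! •
          (ENNReal.ofReal (((n - 1)! * ∏ j, a j : ℕ) : ℝ)⁻¹ * f (univ.image (A a))) := by
        refine sum_congr rfl fun a ha => ?_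
        rw [sum_congr rfl fun σ _ => hg a ha σ, sum_const, card_univ, Fintype.card_perm,
          Fintype.card_fin]
    _ = _ := by
        rw [mul_sum]
        refine sum_congr rfl fun a ha => ?_
        have hn : 1 ≤ n := by
          obtain ⟨h1, hn⟩ := mem_Icc.1 (Fintype.mem_piFinset.1 (mem_filter.1 ha).1 ⟨0, hs⟩)
          exact h1.trans hn
        rw [ENNReal.nsmul_ofReal_mul, factorial_mul_inv_eq hn, ENNReal.ofReal_mul (by positivity),
          ENNReal.ofReal_natCast, mul_assoc]

theorem MeasureTheory.lintegral_ofReal_sum_mul {Ω ι : Type*} [MeasurableSpace Ω]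
    {μ : Measure Ω} (t : Finset ι) {c : ι → ℝ} {h : ι → Ω → ℝ} (hc : ∀ i ∈ t, 0 ≤ c i)
    (hh : ∀ i ∈ t, ∀ ω, 0 ≤ h i ω) (hm : ∀ i ∈ t, AEMeasurable (h i) μ) :
    ∫⁻ ω, ENNReal.ofReal (∑ i ∈ t, c i * h i ω) ∂μ =
      ∑ i ∈ t, ENNReal.ofReal (c i) * ∫⁻ ω, ENNReal.ofReal (h i ω) ∂μ := by
  calc ∫⁻ ω, ENNReal.ofReal (∑ i ∈ t, c i * h i ω) ∂μ
      = ∫⁻ ω, ∑ i ∈ t, ENNReal.ofReal (c i) * ENNReal.ofReal (h i ω) ∂μ := by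
        refine lintegral_congr fun ω => ?_
        rw [ENNReal.ofReal_sum_of_nonneg fun i hi => mul_nonneg (hc i hi) (hh i hi ω)]
        exact sum_congr rfl fun i hi => ENNReal.ofReal_mul (hc i hi)
    _ = _ := by
        rw [lintegral_finsetSum' _ fun i hi => ((hm i hi).ennreal_ofReal).const_mul _]
        exact sum_congr rfl fun i hi => lintegral_const_mul'' _ (hm i hi).ennreal_ofReal

section ClusterMarginal

variable (k : ℝ → ℝ → ℝ) (q0 : ℝ → ℝ) {n : ℕ}

theorem clusterMarginal_nonneg (hknn : ∀ x θ, 0 ≤ k x θ) (hq0nn : ∀ θ, 0 ≤ q0 θ)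
    (x : Fin n → ℝ) (B : Finset (Fin n)) : 0 ≤ clusterMarginal k q0 x B :=
  integral_nonneg fun θ => mul_nonneg (prod_nonneg fun _ _ => hknn _ _) (hq0nn θ)

theorem measurable_clusterMarginal (hkmeas : Measurable (Function.uncurry k))
    (hq0meas : Measurable q0) (B : Finset (Fin n)) :
    Measurable fun x : Fin n → ℝ => clusterMarginal k q0 x B := by
  have hk : ∀ i, Measurable fun p : (Fin n → ℝ) × ℝ => k (p.1 i) p.2 := fun i =>
    hkmeas.comp (f := fun p : (Fin n → ℝ) × ℝ => (p.1 i, p.2))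
      (((measurable_pi_apply i).comp measurable_fst).prodMk measurable_snd)
  have h : Measurable fun p : (Fin n → ℝ) × ℝ => (∏ i ∈ B, k (p.1 i) p.2) * q0 p.2 :=
    (Finset.measurable_prod B fun i _ => hk i).mul (hq0meas.comp measurable_snd)
  exact h.stronglyMeasurable.integral_prod_right'.measurable

theorem clusterMarginal_image_perm (x : Fin n → ℝ) (σ : Perm (Fin n)) (B : Finset (Fin n)) :
    clusterMarginal k q0 x (B.image σ) = clusterMarginal k q0 (x ∘ σ) B := by
  simp only [clusterMarginal, prod_image fun i _ l _ h => σ.injective h, Function.comp_apply]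

def marginalRatio (x : Fin n → ℝ) (P : Finset (Finset (Fin n))) : ℝ :=
  (∏ B ∈ P, clusterMarginal k q0 x B) / clusterMarginal k q0 x univ

theorem marginalRatio_nonneg (hknn : ∀ x θ, 0 ≤ k x θ) (hq0nn : ∀ θ, 0 ≤ q0 θ)
    (x : Fin n → ℝ) (P : Finset (Finset (Fin n))) : 0 ≤ marginalRatio k q0 x P :=
  div_nonneg (prod_nonneg fun B _ => clusterMarginal_nonneg k q0 hknn hq0nn x B)
    (clusterMarginal_nonneg k q0 hknn hq0nn x univ)

theorem measurable_marginalRatio (hkmeas : Measurable (Function.uncurry k))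
    (hq0meas : Measurable q0) (P : Finset (Finset (Fin n))) :
    Measurable fun x : Fin n → ℝ => marginalRatio k q0 x P :=
  (Finset.measurable_prod P fun B _ => measurable_clusterMarginal k q0 hkmeas hq0meas B).div
    (measurable_clusterMarginal k q0 hkmeas hq0meas univ)

theorem marginalRatio_image_perm (x : Fin n → ℝ) (σ : Perm (Fin n))
    (P : Finset (Finset (Fin n))) :
    marginalRatio k q0 x (P.image fun B => B.image σ) = marginalRatio k q0 (x ∘ σ) P := by
  rw [marginalRatio, marginalRatio, prod_image fun B _ B' _ h => image_injective σ.injective h,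
    ← clusterMarginal_image_perm k q0 x σ univ, image_univ_equiv]
  simp only [clusterMarginal_image_perm]

theorem lintegral_marginalRatio_image_perm {Ω : Type*} [MeasurableSpace Ω]
    (hkmeas : Measurable (Function.uncurry k)) (hq0meas : Measurable q0) (μ : Measure Ω)
    (X : ℕ → Ω → ℝ) (hXm : ∀ i, Measurable (X i)) (σ : Perm (Fin n))
    (hσ : Measure.map (fun ω (i : Fin n) => X (σ i) ω) μ =
      Measure.map (fun ω (i : Fin n) => X i ω) μ) (P : Finset (Finset (Fin n))) :
    ∫⁻ ω, ENNReal.ofReal (marginalRatio k q0 (fun i => X i ω) (P.image fun B => B.image σ)) ∂μ =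
      ∫⁻ ω, ENNReal.ofReal (marginalRatio k q0 (fun i => X i ω) P) ∂μ := by
  simp_rw [marginalRatio_image_perm]
  refine (ProbabilityTheory.IdentDistrib.comp ⟨?_, ?_, hσ⟩
    (measurable_marginalRatio k q0 hkmeas hq0meas P).ennreal_ofReal).lintegral_eq
  all_goals exact (measurable_pi_lambda _ fun i => hXm _).aemeasurable

end ClusterMarginal

theorem exchangeable_partition_ratio_expectation_general
    {Ω : Type*} [MeasurableSpace Ω] (μ : Measure Ω)
    (X : ℕ → Ω → ℝ) (hXm : ∀ i, Measurable (X i))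
    (hexch : ∀ (n : ℕ) (σ : Equiv.Perm (Fin n)),
      Measure.map (fun ω => fun i : Fin n => X (σ i) ω) μ =
        Measure.map (fun ω => fun i : Fin n => X (i : ℕ) ω) μ)
    (k : ℝ → ℝ → ℝ) (hkmeas : Measurable (Function.uncurry k)) (hknn : ∀ x θ, 0 ≤ k x θ)
    (q0 : ℝ → ℝ) (hq0meas : Measurable q0) (hq0nn : ∀ θ, 0 ≤ q0 θ)
    (n s : ℕ) (hs : 1 ≤ s)
    (A : (Fin s → ℕ) → Fin s → Finset (Fin n))
    (hAcard : ∀ a ∈ compositions n s, ∀ j, (A a j).card = a j)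
    (hAdisj : ∀ a ∈ compositions n s, ∀ j l, j ≠ l → Disjoint (A a j) (A a l)) :
    (∫⁻ ω, ENNReal.ofReal (∑ P ∈ partitionsInto n s,
        (∏ B ∈ P, ((B.card - 1).factorial : ℝ)) / ((n - 1).factorial : ℝ) *
          ((∏ B ∈ P, clusterMarginal k q0 (fun i : Fin n => X i ω) B) /
            clusterMarginal k q0 (fun i : Fin n => X i ω) Finset.univ)) ∂μ)
      = ∑ a ∈ compositions n s,
          ENNReal.ofReal ((n : ℝ) / ((s.factorial : ℝ) * ∏ j, (a j : ℝ))) *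
          ∫⁻ ω, ENNReal.ofReal
            ((∏ j, clusterMarginal k q0 (fun i : Fin n => X i ω) (A a j)) /
              clusterMarginal k q0 (fun i : Fin n => X i ω) Finset.univ) ∂μ := by
  have hA : ∀ a ∈ compositions n s, IsOrderedPartition (A a) := fun a ha =>
    .of_mem_compositions ha (hAcard a ha) (hAdisj a ha)
  refine (lintegral_ofReal_sum_mul (h := fun P ω => marginalRatio k q0 (fun i => X i ω) P) _
    (fun P _ => by positivity) (fun P _ ω => marginalRatio_nonneg k q0 hknn hq0nn _ P)
    (fun P _ => ((measurable_marginalRatio k q0 hkmeas hq0meas P).comp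
      (measurable_pi_lambda _ fun i => hXm i)).aemeasurable)).trans ?_
  rw [sum_partitionsInto_eq_sum_compositions hs A hA hAcard _ fun σ =>
    lintegral_marginalRatio_image_perm k q0 hkmeas hq0meas μ X hXm σ (hexch n σ)]
  refine sum_congr rfl fun a ha => congrArg _ (lintegral_congr fun ω => ?_)
  rw [marginalRatio, prod_image fun j _ l _ h => (hA a ha).injective h]

/-- Lemma 3 of the paper.
For an exchangeable sequence `(X_1, X_2, …)`, the expectation of
`Σ_{A∈τ_s(n)} (∏_j (|A_j|−1)!/(n−1)!) ∏_j m(X_{A_j})/m(X_{1:n})` equals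
`Σ_{a∈𝓕_s(n)} (n/(s! ∏_j a_j)) E[∏_j m(X_{A_j^a})/m(X_{1:n})]`, where `A^a` is any fixed
partition with block sizes `a`; the equality is taken in `[0,∞]`. -/
theorem exchangeable_partition_ratio_expectation
    {Ω : Type*} [MeasurableSpace Ω] (μ : Measure Ω) [IsProbabilityMeasure μ]
    (X : ℕ → Ω → ℝ) (hXm : ∀ i, Measurable (X i))
    (hexch : ∀ (n : ℕ) (σ : Equiv.Perm (Fin n)),
      Measure.map (fun ω => fun i : Fin n => X (σ i) ω) μ =
        Measure.map (fun ω => fun i : Fin n => X (i : ℕ) ω) μ)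
    (k : ℝ → ℝ → ℝ) (hkmeas : Measurable (Function.uncurry k)) (hknn : ∀ x θ, 0 ≤ k x θ)
    (q0 : ℝ → ℝ) (hq0meas : Measurable q0) (hq0nn : ∀ θ, 0 ≤ q0 θ)
    (hq0int : (∫ θ, q0 θ) = 1)
    (n s : ℕ) (hs : 1 ≤ s) (hsn : s ≤ n)
    (hpos : ∀ᵐ ω ∂μ,
      0 < clusterMarginal k q0 (fun i : Fin n => X i ω) (Finset.univ : Finset (Fin n)))
    (A : (Fin s → ℕ) → Fin s → Finset (Fin n))
    (hAcard : ∀ a ∈ compositions n s, ∀ j, (A a j).card = a j)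
    (hAdisj : ∀ a ∈ compositions n s, ∀ j l, j ≠ l → Disjoint (A a j) (A a l)) :
    (∫⁻ ω, ENNReal.ofReal (∑ P ∈ partitionsInto n s,
        (∏ B ∈ P, ((B.card - 1).factorial : ℝ)) / ((n - 1).factorial : ℝ) *
          ((∏ B ∈ P, clusterMarginal k q0 (fun i : Fin n => X i ω) B) /
            clusterMarginal k q0 (fun i : Fin n => X i ω) Finset.univ)) ∂μ)
      = ∑ a ∈ compositions n s,
          ENNReal.ofReal ((n : ℝ) / ((s.factorial : ℝ) * ∏ j, (a j : ℝ))) *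
          ∫⁻ ω, ENNReal.ofReal
            ((∏ j, clusterMarginal k q0 (fun i : Fin n => X i ω) (A a j)) /
              clusterMarginal k q0 (fun i : Fin n => X i ω) Finset.univ) ∂μ :=
  exchangeable_partition_ratio_expectation_general μ X hXm hexch k hkmeas hknn q0 hq0meas hq0nn n s
    hs A hAcard hAdisj
end
end

section
/- Let c > 0 and let g be a probability density on ℝ with 0 < m ≤ g(x) ≤ M < ∞ for x ∈ [−c, c] and g(x) = 0 outside [−c, c]. Let t ≥ 1, let θ_1*, …, θ_t* ∈ ℝ satisfy |θ_j* − θ_k*| > 2c for all j ≠ k, let p_1, …, p_t ∈ (0,1) sum to 1, and let X_1, X_2, … be i.i.d. with density f(x) = Σ_{j=1}^t p_j g(x − θ_j*). For each j and each n, let n_j = #{i ≤ n : X_i ∈ [θ_j* − c, θ_j* + c]} and let X^j_{(n_j)} = max{X_i : i ≤ n, X_i ∈ [θ_j* − c, θ_j* + c]} (when n_j ≥ 1). Define Y^j_n = min(1, n_j (log n)^{1/(2t)} (c + θ_j* − X^j_{(n_j)})) when n_j ≥ 1, and Y^j_n = 1 when n_j = 0. Then for every j = 1, …, t, Y^j_n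 → 1 in probability as n → ∞. -/
open MeasureTheory Filter Topology
open scoped Classical BigOperators ENNReal

noncomputable section

/-- The indices `i` among the first `n` whose observation falls in the window
`[θ − c, θ + c]`. -/
def windowIdx (c θ : ℝ) {n : ℕ} (x : Fin n → ℝ) : Finset (Fin n) :=
  Finset.univ.filter fun i => x i ∈ Set.Icc (θ - c) (θ + c)

/-- The statistic `Y^j_n = min(1, n_j (log n)^{1/(2t)} (c + θ_j* − X^j_{(n_j)}))`
(set to `1` when the window is empty), where `n_j` is the number of observations in the
window `[θ − c, θ + c]` and `X^j_{(n_j)}` their maximum. -/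
def Ywindow (c : ℝ) (t : ℕ) (θ : ℝ) (n : ℕ) (x : Fin n → ℝ) : ℝ :=
  if h : (windowIdx c θ x).Nonempty then
    min 1 (((windowIdx c θ x).card : ℝ) * Real.log n ^ ((1 : ℝ) / (2 * t)) *
      (c + θ - (windowIdx c θ x).sup' h x))
  else 1

/-! By the strong law of large numbers, with probability tending to one the window
`[θ_j - c, θ_j + c]` holds more than `q n / 2` of the first `n` observations, where `q > 0` is
its probability. On that event `Y^j_n < 1` forces the window maximum to lie within
`d_n = 2 / (q n (log n)^{1/(2t)})` of `θ_j + c`; as the density is at most `M`, a union bound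
over the `n` observations bounds the probability of this by `n M d_n = 2 M / (q (log n)^{1/(2t)})`,
which tends to zero. -/

open Set ProbabilityTheory

theorem tendstoInMeasure_of_tendsto_measure_ne {α ι E : Type*} [MeasurableSpace α]
    [PseudoEMetricSpace E] {μ : Measure α} {l : Filter ι} {f : ι → α → E} {g : α → E}
    (h : Tendsto (fun i => μ {x | f i x ≠ g x}) l (𝓝 0)) : TendstoInMeasure μ f l g := by
  intro ε hε
  refine tendsto_of_tendsto_of_tendsto_of_le_of_le tendsto_const_nhds h (fun _ => zero_le)
    fun i => measure_mono fun x hx heq => ?_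
  have : ε ≤ edist (f i x) (g x) := hx
  rw [heq, edist_self] at this
  exact hε.not_ge this

theorem TendstoInMeasure.tendsto_measure_le_of_lt {α ι : Type*} [MeasurableSpace α]
    {μ : Measure α} {l : Filter ι} {f : ι → α → ℝ} {a b : ℝ}
    (h : TendstoInMeasure μ f l fun _ => b) (hab : a < b) :
    Tendsto (fun i => μ {x | f i x ≤ a}) l (𝓝 0) := by
  refine tendsto_of_tendsto_of_tendsto_of_le_of_le tendsto_const_nhds
    (h (ENNReal.ofReal (b - a)) (by simpa using hab)) (fun _ => zero_le)
    fun i => measure_mono fun x (hx : f i x ≤ a) => ?_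
  change _ ≤ edist (f i x) b
  rw [edist_dist, Real.dist_eq, abs_sub_comm]
  exact ENNReal.ofReal_le_ofReal ((by linarith : b - a ≤ b - f i x).trans (le_abs_self _))

theorem tendstoInMeasure_card_filter_mem_div {Ω E : Type*} [MeasurableSpace Ω]
    [MeasurableSpace E] {μ : Measure Ω} [IsFiniteMeasure μ] {X : ℕ → Ω → E}
    (hX : ∀ i, Measurable (X i)) (hindep : Pairwise fun i k => IndepFun (X i) (X k) μ)
    (hident : ∀ i, IdentDistrib (X i) (X 0) μ μ) {S : Set E} [DecidablePred (· ∈ S)]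
    (hS : MeasurableSet S) :
    TendstoInMeasure μ
      (fun (n : ℕ) ω => ((Finset.univ.filter fun i : Fin n => X i ω ∈ S).card : ℝ) / n)
      atTop (fun _ => μ.real (X 0 ⁻¹' S)) := by
  set φ : E → ℝ := S.indicator 1
  have hφ : Measurable φ := measurable_one.indicator hS
  have hcard : ∀ n ω, ((Finset.univ.filter fun i : Fin n => X i ω ∈ S).card : ℝ) =
      ∑ i ∈ Finset.range n, φ (X i ω) := by
    intro n ω
    rw [Finset.card_filter, ← Fin.sum_univ_eq_sum_range (fun i => φ (X i ω))]
    push_cast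
    simp [φ, Set.indicator_apply]
  have hφX : (fun ω => φ (X 0 ω)) = (X 0 ⁻¹' S).indicator 1 := by
    ext ω
    simp [φ, Set.indicator_apply]
  have hmean : μ[fun ω => φ (X 0 ω)] = μ.real (X 0 ⁻¹' S) := by
    rw [hφX, integral_indicator_one (hX 0 hS)]
  have hint : Integrable (fun ω => φ (X 0 ω)) μ := by
    rw [hφX]
    exact (integrable_const 1).indicator (hX 0 hS)
  have hlaw := strong_law_ae_real (fun i ω => φ (X i ω)) hint
    (fun i k hik => (hindep hik).comp hφ hφ) fun i => (hident i).comp hφ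
  simp only [hmean, ← hcard] at hlaw
  refine tendstoInMeasure_of_tendsto_ae (fun n => ?_) hlaw
  simp only [hcard]
  exact ((Finset.measurable_sum _ fun i _ => hφ.comp (hX i)).div_const _).aestronglyMeasurable

section Density

variable {Ω : Type*} [MeasurableSpace Ω] {μ : Measure Ω} {Y : Ω → ℝ} {f : ℝ → ℝ}

theorem measure_preimage_eq_setLIntegral (hY : Measurable Y)
    (hmap : μ.map Y = volume.withDensity fun x => ENNReal.ofReal (f x))
    {s : Set ℝ} (hs : MeasurableSet s) :
    μ (Y ⁻¹' s) = ∫⁻ x in s, ENNReal.ofReal (f x) := by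
  rw [← Measure.map_apply hY hs, hmap, withDensity_apply _ hs]

theorem measure_preimage_Icc_le_of_le (hY : Measurable Y)
    (hmap : μ.map Y = volume.withDensity fun x => ENNReal.ofReal (f x))
    {B : ℝ} (hB : 0 ≤ B) (hfB : ∀ x, f x ≤ B) (a b : ℝ) :
    μ (Y ⁻¹' Icc a b) ≤ ENNReal.ofReal (B * (b - a)) :=
  calc μ (Y ⁻¹' Icc a b) = ∫⁻ x in Icc a b, ENNReal.ofReal (f x) :=
        measure_preimage_eq_setLIntegral hY hmap measurableSet_Icc
    _ ≤ ∫⁻ _ in Icc a b, ENNReal.ofReal B :=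
        lintegral_mono fun x => ENNReal.ofReal_le_ofReal (hfB x)
    _ = ENNReal.ofReal (B * (b - a)) := by
        rw [setLIntegral_const, Real.volume_Icc, ENNReal.ofReal_mul hB]

theorem ofReal_le_measure_preimage_Icc (hY : Measurable Y)
    (hmap : μ.map Y = volume.withDensity fun x => ENNReal.ofReal (f x))
    {m a b : ℝ} (hm : 0 ≤ m) (hfm : ∀ x ∈ Icc a b, m ≤ f x) :
    ENNReal.ofReal (m * (b - a)) ≤ μ (Y ⁻¹' Icc a b) :=
  calc ENNReal.ofReal (m * (b - a)) = ∫⁻ _ in Icc a b, ENNReal.ofReal m := by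
        rw [setLIntegral_const, Real.volume_Icc, ENNReal.ofReal_mul hm]
    _ ≤ ∫⁻ x in Icc a b, ENNReal.ofReal (f x) :=
        setLIntegral_mono' measurableSet_Icc fun x hx => ENNReal.ofReal_le_ofReal (hfm x hx)
    _ = μ (Y ⁻¹' Icc a b) := (measure_preimage_eq_setLIntegral hY hmap measurableSet_Icc).symm

end Density

section LocationMixture

variable {c m M : ℝ} {g : ℝ → ℝ}

theorem nonneg_of_forall_Icc_le_of_eq_zero (hm : 0 ≤ m) (hgm : ∀ x ∈ Icc (-c) c, m ≤ g x)
    (hgzero : ∀ x ∉ Icc (-c) c, g x = 0) (y : ℝ) : 0 ≤ g y := by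
  by_cases hy : y ∈ Icc (-c) c
  exacts [hm.trans (hgm y hy), (hgzero y hy).ge]

theorem le_of_forall_Icc_le_of_eq_zero (hM : 0 ≤ M) (hgM : ∀ x ∈ Icc (-c) c, g x ≤ M)
    (hgzero : ∀ x ∉ Icc (-c) c, g x = 0) (y : ℝ) : g y ≤ M := by
  by_cases hy : y ∈ Icc (-c) c
  exacts [hgM y hy, (hgzero y hy).trans_le hM]

variable {ι : Type*} [Fintype ι] {θs p : ι → ℝ}

theorem sum_mul_shift_le (hp : ∀ l, 0 ≤ p l) (hpsum : ∑ l, p l = 1) (hgM : ∀ y, g y ≤ M)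
    (x : ℝ) : ∑ l, p l * g (x - θs l) ≤ M :=
  calc ∑ l, p l * g (x - θs l) ≤ ∑ l, p l * M := by gcongr with l; exacts [hp l, hgM _]
    _ = M := by rw [← Finset.sum_mul, hpsum, one_mul]

theorem mul_le_sum_mul_shift (hp : ∀ l, 0 ≤ p l) (hg : ∀ y, 0 ≤ g y)
    (hgm : ∀ x ∈ Icc (-c) c, m ≤ g x) (j : ι) {x : ℝ}
    (hx : x ∈ Icc (θs j - c) (θs j + c)) :
    p j * m ≤ ∑ l, p l * g (x - θs l) :=
  calc p j * m ≤ p j * g (x - θs j) :=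
        mul_le_mul_of_nonneg_left (hgm _ ⟨by linarith [hx.1], by linarith [hx.2]⟩) (hp j)
    _ ≤ ∑ l, p l * g (x - θs l) :=
        Finset.single_le_sum (f := fun l => p l * g (x - θs l))
          (fun l _ => mul_nonneg (hp l) (hg _)) (Finset.mem_univ j)

end LocationMixture

theorem Ywindow_eq_one_of_forall_notMem_Icc {c θ d : ℝ} {t n : ℕ} {x : Fin n → ℝ}
    (hd : 1 ≤ (windowIdx c θ x).card * Real.log n ^ ((1 : ℝ) / (2 * t)) * d)
    (hx : ∀ i, x i ∉ Icc (θ + c - d) (θ + c)) : Ywindow c t θ n x = 1 := by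
  unfold Ywindow
  split_ifs with hne
  · obtain ⟨i, hi, hmax⟩ := (windowIdx c θ x).exists_mem_eq_sup' hne x
    have hxi : x i ≤ θ + c := (Finset.mem_filter.mp hi).2.2
    have hgap : d ≤ c + θ - x i := by
      by_contra! h
      exact hx i ⟨by linarith, hxi⟩
    have hscale : 0 ≤ ((windowIdx c θ x).card : ℝ) * Real.log n ^ ((1 : ℝ) / (2 * t)) :=
      mul_nonneg (Nat.cast_nonneg _) (Real.rpow_nonneg (Real.log_natCast_nonneg n) _)
    rw [hmax, min_eq_left (hd.trans (mul_le_mul_of_nonneg_left hgap hscale))]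
  · rfl

theorem measure_Ywindow_ne_one_le {Ω : Type*} [MeasurableSpace Ω] {μ : Measure Ω}
    {X : ℕ → Ω → ℝ} {B q c θ : ℝ} {t n : ℕ}
    (hXB : ∀ i a b, μ (X i ⁻¹' Icc a b) ≤ ENNReal.ofReal (B * (b - a)))
    (hq : 0 < q) (hn : 2 ≤ n) :
    μ {ω | Ywindow c t θ n (fun i : Fin n => X i ω) ≠ 1} ≤
      μ {ω | ((windowIdx c θ fun i : Fin n => X i ω).card : ℝ) / n ≤ q / 2} +
        ENNReal.ofReal (2 * B / (q * Real.log n ^ ((1 : ℝ) / (2 * t)))) := by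
  set L := Real.log n ^ ((1 : ℝ) / (2 * t))
  have hn₀ : (0 : ℝ) < n := by positivity
  have hL : 0 < L := Real.rpow_pos_of_pos (Real.log_pos (by exact_mod_cast hn)) _
  set d := 2 / (q * n * L)
  have hsub : {ω | Ywindow c t θ n (fun i : Fin n => X i ω) ≠ 1} ⊆
      {ω | ((windowIdx c θ fun i : Fin n => X i ω).card : ℝ) / n ≤ q / 2} ∪
        ⋃ i : Fin n, X i ⁻¹' Icc (θ + c - d) (θ + c) := by
    intro ω hω
    by_contra! hout
    simp only [mem_union, mem_ofPred_eq, mem_iUnion, Set.mem_preimage, not_or, not_le,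
      not_exists] at hout
    refine hω (Ywindow_eq_one_of_forall_notMem_Icc ?_ hout.2)
    have hcard := (lt_div_iff₀ hn₀).mp hout.1
    calc (1 : ℝ) ≤ 2 * (windowIdx c θ fun i : Fin n => X i ω).card / (q * n) := by
          rw [le_div_iff₀ (by positivity)]
          linarith
      _ = (windowIdx c θ fun i : Fin n => X i ω).card * L * d := by
          simp only [d]
          field_simp
  calc μ {ω | Ywindow c t θ n (fun i : Fin n => X i ω) ≠ 1}
      ≤ μ {ω | ((windowIdx c θ fun i : Fin n => X i ω).card : ℝ) / n ≤ q / 2} +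
          ∑ i : Fin n, μ (X i ⁻¹' Icc (θ + c - d) (θ + c)) :=
        (measure_mono hsub).trans ((measure_union_le _ _).trans
          (add_le_add le_rfl (measure_iUnion_fintype_le _ _)))
    _ ≤ _ + ∑ _i : Fin n, ENNReal.ofReal (B * d) := by
        gcongr with i
        simpa using hXB i (θ + c - d) (θ + c)
    _ = _ := by
        rw [Finset.sum_const, Finset.card_univ, Fintype.card_fin, nsmul_eq_mul,
          ← ENNReal.ofReal_natCast, ← ENNReal.ofReal_mul hn₀.le]
        congr 2
        simp only [d]
        field_simp

theorem tendstoInMeasure_Ywindow_one {Ω : Type*} [MeasurableSpace Ω] {μ : Measure Ω}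
    {X : ℕ → Ω → ℝ} {B q c θ : ℝ} {t : ℕ}
    (hXB : ∀ i a b, μ (X i ⁻¹' Icc a b) ≤ ENNReal.ofReal (B * (b - a)))
    (hq : 0 < q) (ht : 0 < t)
    (hfreq : TendstoInMeasure μ
      (fun (n : ℕ) ω => ((windowIdx c θ fun i : Fin n => X i ω).card : ℝ) / n) atTop
      (fun _ => q)) :
    TendstoInMeasure μ (fun n ω => Ywindow c t θ n (fun i : Fin n => X i ω)) atTop
      (fun _ => 1) := by
  have hscale : Tendsto (fun n : ℕ => Real.log n ^ ((1 : ℝ) / (2 * t))) atTop atTop :=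
    (tendsto_rpow_atTop (by positivity)).comp
      (Real.tendsto_log_atTop.comp tendsto_natCast_atTop_atTop)
  have hgap : Tendsto
      (fun n : ℕ => ENNReal.ofReal (2 * B / (q * Real.log n ^ ((1 : ℝ) / (2 * t)))))
      atTop (𝓝 0) := by
    simpa using ENNReal.tendsto_ofReal (tendsto_const_nhds.div_atTop (hscale.const_mul_atTop hq))
  have hbound := (TendstoInMeasure.tendsto_measure_le_of_lt hfreq (half_lt_self hq)).add hgap
  rw [add_zero] at hbound
  refine tendstoInMeasure_of_tendsto_measure_ne (tendsto_of_tendsto_of_tendsto_of_le_of_le'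
    tendsto_const_nhds hbound (.of_forall fun _ => zero_le) ?_)
  filter_upwards [eventually_ge_atTop 2] with n hn
  exact measure_Ywindow_ne_one_le hXB hq hn

theorem window_maximum_gap_tendsto_one_general
    (c m M : ℝ) (hc : 0 < c) (hm : 0 < m)
    (g : ℝ → ℝ)
    (hgbd : ∀ x ∈ Set.Icc (-c) c, m ≤ g x ∧ g x ≤ M)
    (hgzero : ∀ x ∉ Set.Icc (-c) c, g x = 0)
    (t : ℕ) (θs : Fin t → ℝ)
    (p : Fin t → ℝ) (hp : ∀ j, p j ∈ Set.Ioo (0:ℝ) 1) (hpsum : ∑ j, p j = 1)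
    (Ω : Type) [MeasurableSpace Ω] (μ : Measure Ω) [IsProbabilityMeasure μ]
    (X : ℕ → Ω → ℝ)
    (hX : IsIIDWithDensity Ω μ X (fun x => ∑ j, p j * g (x - θs j))) :
    ∀ j : Fin t,
      TendstoInMeasure μ (fun n ω => Ywindow c t (θs j) n (fun i : Fin n => X i ω))
        atTop (fun _ => 1) := by
  intro j
  obtain ⟨hXmeas, hXindep, hXmap⟩ := hX
  have hp₀ : ∀ l, 0 ≤ p l := fun l => (hp l).1.le
  have hgm : ∀ x ∈ Icc (-c) c, m ≤ g x := fun x hx => (hgbd x hx).1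
  have hbd₀ := hgbd 0 ⟨by linarith, hc.le⟩
  have hM : 0 ≤ M := hm.le.trans (hbd₀.1.trans hbd₀.2)
  have hg_nonneg := nonneg_of_forall_Icc_le_of_eq_zero hm.le hgm hgzero
  have hg_le := le_of_forall_Icc_le_of_eq_zero hM (fun x hx => (hgbd x hx).2) hgzero
  have hident : ∀ i, IdentDistrib (X i) (X 0) μ μ := fun i =>
    ⟨(hXmeas i).aemeasurable, (hXmeas 0).aemeasurable, by rw [hXmap i, hXmap 0]⟩
  have hwindow := ofReal_le_measure_preimage_Icc (hXmeas 0) (hXmap 0) (mul_pos (hp j).1 hm).le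
    fun x => mul_le_sum_mul_shift hp₀ hg_nonneg hgm j
  have hq : 0 < μ.real (X 0 ⁻¹' Icc (θs j - c) (θs j + c)) := by
    have hwidth : 0 < θs j + c - (θs j - c) := by linarith
    have hlow := ENNReal.ofReal_pos.mpr (mul_pos (mul_pos (hp j).1 hm) hwidth)
    exact ENNReal.toReal_pos (hlow.trans_le hwindow).ne' (measure_ne_top _ _)
  have hfreq := tendstoInMeasure_card_filter_mem_div hXmeas (fun i k hik => hXindep.indepFun hik)
    hident (measurableSet_Icc (a := θs j - c) (b := θs j + c))
  have hXB := fun i => measure_preimage_Icc_le_of_le (hXmeas i) (hXmap i) hM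
    (sum_mul_shift_le hp₀ hpsum hg_le)
  exact tendstoInMeasure_Ywindow_one hXB hq j.pos hfreq

/-- Lemma S.8 of the paper.
For data i.i.d. from a completely separated mixture of a compactly supported,
bounded-above-and-below location kernel, the rescaled gap between `c + θ_j*` and the
maximum observation of the `j`-th group, capped at one, converges to `1` in probability. -/
theorem window_maximum_gap_tendsto_one
    (c m M : ℝ) (hc : 0 < c) (hm : 0 < m)
    (g : ℝ → ℝ) (hgmeas : Measurable g) (hgint : (∫ x, g x = 1))
    (hgbd : ∀ x ∈ Set.Icc (-c) c, m ≤ g x ∧ g x ≤ M)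
    (hgzero : ∀ x ∉ Set.Icc (-c) c, g x = 0)
    (t : ℕ) (ht : 1 ≤ t) (θs : Fin t → ℝ)
    (hsep : ∀ j k, j ≠ k → 2 * c < |θs j - θs k|)
    (p : Fin t → ℝ) (hp : ∀ j, p j ∈ Set.Ioo (0:ℝ) 1) (hpsum : ∑ j, p j = 1)
    (Ω : Type) [MeasurableSpace Ω] (μ : Measure Ω) [IsProbabilityMeasure μ]
    (X : ℕ → Ω → ℝ)
    (hX : IsIIDWithDensity Ω μ X (fun x => ∑ j, p j * g (x - θs j))) :
    ∀ j : Fin t,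
      TendstoInMeasure μ (fun n ω => Ywindow c t (θs j) n (fun i : Fin n => X i ω))
        atTop (fun _ => 1) :=
  window_maximum_gap_tendsto_one_general c m M hc hm g hgbd hgzero t θs p hp hpsum Ω μ X hX
end
end

section
/- For every real p > 1 and all integers s ≥ 2 and n ≥ s, Σ_{a ∈ 𝓕_s(n)} (n/∏_{j=1}^s a_j)^p < C_p^{s−1}, where 𝓕_s(n) = {a ∈ {1,…,n}^s : Σ_{j=1}^s a_j = n} and C_p = 2^p ζ(p), with ζ(p) = Σ_{k=1}^∞ k^{−p} the Riemann zeta function. -/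
open scoped Classical BigOperators

noncomputable section

lemma mem_compositions {n s : ℕ} {a : Fin s → ℕ} :
    a ∈ compositions n s ↔ (∀ j, 1 ≤ a j ∧ a j ≤ n) ∧ ∑ j, a j = n := by
  simp [compositions, Fintype.mem_piFinset, Finset.mem_Icc]

lemma two_mean {p x y : ℝ} (hx : 0 ≤ x) (hy : 0 ≤ y) (hp : 1 ≤ p) :
    (x + y) ^ p ≤ 2 ^ (p - 1) * (x ^ p + y ^ p) := by
  have h := NNReal.rpow_add_le_mul_rpow_add_rpow ⟨x, hx⟩ ⟨y, hy⟩ hp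
  have h2 := NNReal.coe_le_coe.2 h
  push_cast [NNReal.coe_rpow] at h2
  exact_mod_cast h2

lemma zeta_summable {p : ℝ} (hp : 1 < p) :
    Summable (fun k : ℕ => ((k : ℝ) + 1) ^ (-p)) := by
  have h : Summable (fun k : ℕ => (k : ℝ) ^ (-p)) := by
    rw [Real.summable_nat_rpow]; linarith
  have h2 := (summable_nat_add_iff 1).2 h
  refine h2.congr fun k => ?_
  push_cast
  ring_nf

lemma zeta_pos {p : ℝ} (hp : 1 < p) : 0 < ∑' k : ℕ, ((k : ℝ) + 1) ^ (-p) := by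
  calc (0:ℝ) < ((0 : ℕ) + 1 : ℝ) ^ (-p) := by norm_num
    _ ≤ ∑' k : ℕ, ((k : ℝ) + 1) ^ (-p) :=
      Summable.le_tsum (zeta_summable hp) 0 fun j _ => by positivity

lemma partial_lt_zeta {p : ℝ} (hp : 1 < p) (n : ℕ) :
    ∑ j ∈ Finset.range n, ((j : ℝ) + 1) ^ (-p) < ∑' k : ℕ, ((k : ℝ) + 1) ^ (-p) := by
  have hs := zeta_summable hp
  have h1 : ∑ j ∈ Finset.range (n+1), ((j : ℝ) + 1) ^ (-p)
      ≤ ∑' k : ℕ, ((k : ℝ) + 1) ^ (-p) :=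
    Summable.sum_le_tsum _ (fun j _ => by positivity) hs
  rw [Finset.sum_range_succ] at h1
  have hpos : (0:ℝ) < ((n : ℝ) + 1) ^ (-p) := by positivity
  linarith

/-- Analytic key lemma: `∑_{k=1}^n (n/(k(n-k)))^p < 2^p ζ(p)` (strictly). -/
lemma key_sum_lt {p : ℝ} (hp : 1 < p) (n : ℕ) :
    ∑ k ∈ Finset.Icc 1 n, ((n : ℝ) / ((k : ℝ) * ((n - k : ℕ) : ℝ))) ^ p
      < 2 ^ p * ∑' k : ℕ, ((k : ℝ) + 1) ^ (-p) := by
  set ζ := ∑' k : ℕ, ((k : ℝ) + 1) ^ (-p) with hζ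
  have hζpos : 0 < ζ := zeta_pos hp
  have hterm : ∀ k ∈ Finset.Icc 1 n,
      ((n : ℝ) / ((k : ℝ) * ((n - k : ℕ) : ℝ))) ^ p
        ≤ 2 ^ (p - 1) * (((k:ℝ)) ^ (-p) + (((n - k : ℕ) : ℝ)) ^ (-p)) := by
    intro k hk
    rw [Finset.mem_Icc] at hk
    obtain ⟨hk1, hkn⟩ := hk
    rcases eq_or_lt_of_le hkn with h | h
    · have h0 : (n - k : ℕ) = 0 := by omega
      rw [h0]
      simp only [Nat.cast_zero, mul_zero, div_zero]
      rw [Real.zero_rpow (by linarith)]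
      positivity
    · have hk0 : (0:ℝ) < (k:ℝ) := by exact_mod_cast hk1
      have hm0 : (0:ℝ) < ((n - k : ℕ) : ℝ) := by
        have : 1 ≤ n - k := by omega
        exact_mod_cast this
      have hcast : ((n - k : ℕ) : ℝ) = (n:ℝ) - (k:ℝ) := by
        push_cast [Nat.cast_sub hkn]; ring
      have heq : (n : ℝ) / ((k : ℝ) * ((n - k : ℕ) : ℝ))
          = ((k:ℝ))⁻¹ + (((n - k : ℕ):ℝ))⁻¹ := by
        rw [inv_add_inv hk0.ne' hm0.ne']
        congr 1
        rw [hcast]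
        ring
      rw [heq]
      refine (two_mean (by positivity) (by positivity) hp.le).trans_eq ?_
      rw [Real.inv_rpow hk0.le, Real.inv_rpow hm0.le,
        ← Real.rpow_neg hk0.le, ← Real.rpow_neg hm0.le]
  have hS1 : ∑ k ∈ Finset.Icc 1 n, ((k:ℝ)) ^ (-p)
      = ∑ j ∈ Finset.range n, ((j : ℝ) + 1) ^ (-p) := by
    refine Finset.sum_nbij' (fun k => k - 1) (fun j => j + 1) ?_ ?_ ?_ ?_ ?_
    · intro k hk; simp only [Finset.mem_Icc, Finset.mem_range] at *; omega
    · intro j hj; simp only [Finset.mem_Icc, Finset.mem_range] at *; omega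
    · intro k hk; simp only [Finset.mem_Icc] at hk; omega
    · intro j _; omega
    · intro k hk
      simp only [Finset.mem_Icc] at hk
      congr 1
      have h1 : k - 1 + 1 = k := by omega
      rw [show ((k-1:ℕ):ℝ) + 1 = ((k - 1 + 1 : ℕ) : ℝ) by push_cast; ring, h1]
  have hS2 : ∑ k ∈ Finset.Icc 1 n, (((n - k : ℕ) : ℝ)) ^ (-p)
      = ∑ m ∈ Finset.range n, ((m:ℝ)) ^ (-p) := by
    refine Finset.sum_nbij' (fun k => n - k) (fun m => n - m) ?_ ?_ ?_ ?_ ?_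
    · intro k hk; simp only [Finset.mem_Icc, Finset.mem_range] at *; omega
    · intro m hm; simp only [Finset.mem_Icc, Finset.mem_range] at *; omega
    · intro k hk; simp only [Finset.mem_Icc] at hk; omega
    · intro m hm; simp only [Finset.mem_range] at hm; omega
    · intro k _; rfl
  have hS2le : ∑ m ∈ Finset.range n, ((m:ℝ)) ^ (-p) ≤ ζ := by
    cases n with
    | zero => simp [hζpos.le]
    | succ n' =>
      rw [Finset.sum_range_succ']
      have h0 : ((0:ℕ):ℝ) ^ (-p) = 0 := by
        rw [Nat.cast_zero, Real.zero_rpow (by linarith)]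
      rw [h0, add_zero]
      calc ∑ i ∈ Finset.range n', (((i+1:ℕ)):ℝ) ^ (-p)
          = ∑ i ∈ Finset.range n', ((i:ℝ) + 1) ^ (-p) := by
            refine Finset.sum_congr rfl fun i _ => ?_; push_cast; ring_nf
        _ ≤ ζ := (partial_lt_zeta hp n').le
  have hS1lt : ∑ k ∈ Finset.Icc 1 n, ((k:ℝ)) ^ (-p) < ζ := by
    rw [hS1]; exact partial_lt_zeta hp n
  have h2p : (0:ℝ) < 2 ^ (p - 1) := by positivity
  have hmain : ∑ k ∈ Finset.Icc 1 n, ((n : ℝ) / ((k : ℝ) * ((n - k : ℕ) : ℝ))) ^ p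
      ≤ 2 ^ (p-1) * ((∑ k ∈ Finset.Icc 1 n, ((k:ℝ)) ^ (-p))
        + ∑ k ∈ Finset.Icc 1 n, (((n - k : ℕ) : ℝ)) ^ (-p)) := by
    calc ∑ k ∈ Finset.Icc 1 n, ((n : ℝ) / ((k : ℝ) * ((n - k : ℕ) : ℝ))) ^ p
        ≤ ∑ k ∈ Finset.Icc 1 n,
            2 ^ (p - 1) * (((k:ℝ)) ^ (-p) + (((n - k : ℕ) : ℝ)) ^ (-p)) :=
          Finset.sum_le_sum hterm
      _ = _ := by rw [← Finset.mul_sum, Finset.sum_add_distrib]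
  have h2 : (2:ℝ) ^ (p-1) * (2 * ζ) = 2 ^ p * ζ := by
    rw [Real.rpow_sub (by norm_num : (0:ℝ) < 2), Real.rpow_one]
    ring
  have hsum2 : ∑ k ∈ Finset.Icc 1 n, (((n - k : ℕ) : ℝ)) ^ (-p) ≤ ζ := by
    rw [hS2]; exact hS2le
  calc ∑ k ∈ Finset.Icc 1 n, ((n : ℝ) / ((k : ℝ) * ((n - k : ℕ) : ℝ))) ^ p
      ≤ 2 ^ (p-1) * ((∑ k ∈ Finset.Icc 1 n, ((k:ℝ)) ^ (-p))
        + ∑ k ∈ Finset.Icc 1 n, (((n - k : ℕ) : ℝ)) ^ (-p)) := hmain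
    _ < 2 ^ (p-1) * (2 * ζ) := by
        apply mul_lt_mul_of_pos_left _ h2p
        linarith
    _ = 2 ^ p * ζ := h2

/-- Decomposition of sums over compositions by the first part. -/
lemma sum_compositions_decomp {s n : ℕ} (f : (Fin (s+1) → ℕ) → ℝ) :
    ∑ a ∈ compositions n (s+1), f a
      = ∑ k ∈ Finset.Icc 1 n, ∑ b ∈ compositions (n-k) s, f (Fin.cons k b) := by
  rw [Finset.sum_sigma' (Finset.Icc 1 n) (fun k => compositions (n-k) s)
    (fun k b => f (Fin.cons k b))]
  refine (Finset.sum_nbij' (fun a => (⟨a 0, Fin.tail a⟩ : Σ _ : ℕ, Fin s → ℕ))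
    (fun x => Fin.cons x.1 x.2) ?_ ?_ ?_ ?_ ?_).symm.symm
  · -- a ∈ compositions n (s+1) → ⟨a 0, tail a⟩ ∈ sigma
    intro a ha
    rw [mem_compositions] at ha
    obtain ⟨hbd, hsum⟩ := ha
    rw [Finset.mem_sigma, Finset.mem_Icc]
    dsimp only
    have htail : ∀ j : Fin s, Fin.tail a j = a j.succ := fun j => rfl
    have hsum' : a 0 + ∑ j : Fin s, Fin.tail a j = n := by
      rw [← hsum, Fin.sum_univ_succ]
      simp only [htail]
    constructor
    · exact ⟨(hbd 0).1, by omega⟩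
    · rw [mem_compositions]
      refine ⟨fun j => ⟨?_, ?_⟩, by omega⟩
      · rw [htail j]; exact (hbd j.succ).1
      · have hle : Fin.tail a j ≤ ∑ i : Fin s, Fin.tail a i :=
          Finset.single_le_sum (f := fun i : Fin s => Fin.tail a i)
            (fun i _ => Nat.zero_le _) (Finset.mem_univ j)
        omega
  · -- sigma → compositions
    intro x hx
    rw [Finset.mem_sigma, Finset.mem_Icc] at hx
    obtain ⟨⟨hk1, hkn⟩, hb⟩ := hx
    rw [mem_compositions] at hb ⊢
    obtain ⟨hbd, hsum⟩ := hb
    constructor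
    · intro j
      refine Fin.cases ?_ (fun i => ?_) j
      · simpa using ⟨hk1, hkn⟩
      · simp only [Fin.cons_succ]
        exact ⟨(hbd i).1, le_trans (hbd i).2 (by omega)⟩
    · rw [Fin.sum_univ_succ]
      simp only [Fin.cons_zero, Fin.cons_succ]
      omega
  · intro a _
    dsimp only
    exact Fin.cons_self_tail a
  · intro x _
    obtain ⟨k, b⟩ := x
    dsimp only
    simp [Fin.tail_cons]
  · intro a _
    dsimp only
    exact (congrArg f (Fin.cons_self_tail a)).symm

lemma compositions_zero_empty {s : ℕ} : compositions 0 (s+1) = ∅ :=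
  Finset.eq_empty_of_forall_notMem fun a ha => by
    rw [mem_compositions] at ha
    have := (ha.1 0)
    omega

lemma prod_pos_of_mem {m s : ℕ} {b : Fin s → ℕ} (hb : b ∈ compositions m s) :
    0 < ∏ j, (b j : ℝ) := by
  rw [mem_compositions] at hb
  exact Finset.prod_pos fun j _ => by
    have := (hb.1 j).1
    exact_mod_cast Nat.lt_of_lt_of_le Nat.zero_lt_one this

/-- The non-strict inductive bound. -/
lemma comp_bound_aux {p : ℝ} (hp : 1 < p) :
    ∀ t n : ℕ, ∑ a ∈ compositions n (t+1), ((n : ℝ) / ∏ j, (a j : ℝ)) ^ p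
      ≤ ((2:ℝ) ^ p * ∑' k : ℕ, ((k : ℝ) + 1) ^ (-p)) ^ t := by
  intro t
  induction t with
  | zero =>
    intro n
    rw [pow_zero]
    have hsub : compositions n 1 ⊆ {fun _ => n} := by
      intro a ha
      rw [mem_compositions] at ha
      rw [Finset.mem_singleton]
      funext j
      have : a 0 = n := by rw [← ha.2, Fin.sum_univ_one]
      rw [Subsingleton.elim j 0, this]
    calc ∑ a ∈ compositions n 1, ((n : ℝ) / ∏ j, (a j : ℝ)) ^ p
        ≤ ∑ a ∈ ({fun _ => n} : Finset (Fin 1 → ℕ)), ((n : ℝ) / ∏ j, (a j : ℝ)) ^ p :=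
          Finset.sum_le_sum_of_subset_of_nonneg hsub fun a _ _ => by positivity
      _ = ((n : ℝ) / (n : ℝ)) ^ p := by
          rw [Finset.sum_singleton, Fin.prod_univ_one]
      _ ≤ 1 := by
          rcases Nat.eq_zero_or_pos n with h | h
          · subst h
            norm_num
            rw [Real.zero_rpow (by linarith)]
            norm_num
          · rw [div_self (by exact_mod_cast h.ne' : (n:ℝ) ≠ 0), Real.one_rpow]
  | succ t ih =>
    intro n
    set ζ := ∑' k : ℕ, ((k : ℝ) + 1) ^ (-p) with hζ
    have hζpos : 0 < ζ := zeta_pos hp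
    set C := (2:ℝ) ^ p * ζ with hC
    have hCpos : 0 < C := by positivity
    rw [sum_compositions_decomp]
    have hinner : ∀ k ∈ Finset.Icc 1 n,
        ∑ b ∈ compositions (n-k) (t+1),
          ((n : ℝ) / ∏ j, ((Fin.cons k b : Fin (t+2) → ℕ) j : ℝ)) ^ p
        ≤ ((n : ℝ) / ((k : ℝ) * ((n - k : ℕ) : ℝ))) ^ p * C ^ t := by
      intro k hk
      rw [Finset.mem_Icc] at hk
      rcases Nat.eq_zero_or_pos (n - k) with h0 | h0
      · rw [h0, compositions_zero_empty, Finset.sum_empty]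
        positivity
      · have hk0 : (0:ℝ) < (k:ℝ) := by exact_mod_cast hk.1
        have hm0 : (0:ℝ) < ((n - k : ℕ) : ℝ) := by exact_mod_cast h0
        calc ∑ b ∈ compositions (n-k) (t+1),
              ((n : ℝ) / ∏ j, ((Fin.cons k b : Fin (t+2) → ℕ) j : ℝ)) ^ p
            = ∑ b ∈ compositions (n-k) (t+1),
              ((n : ℝ) / ((k : ℝ) * ((n - k : ℕ) : ℝ))) ^ p
                * (((n - k : ℕ) : ℝ) / ∏ j, (b j : ℝ)) ^ p := by
              refine Finset.sum_congr rfl fun b hb => ?_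
              have hP : 0 < ∏ j, (b j : ℝ) := prod_pos_of_mem hb
              have hprod : ∏ j, ((Fin.cons k b : Fin (t+2) → ℕ) j : ℝ)
                  = (k : ℝ) * ∏ j, (b j : ℝ) := by
                rw [Fin.prod_univ_succ]
                simp [Fin.cons_zero, Fin.cons_succ]
              rw [hprod, ← Real.mul_rpow (by positivity) (by positivity)]
              congr 1
              field_simp
          _ = ((n : ℝ) / ((k : ℝ) * ((n - k : ℕ) : ℝ))) ^ p
              * ∑ b ∈ compositions (n-k) (t+1),
                (((n - k : ℕ) : ℝ) / ∏ j, (b j : ℝ)) ^ p := by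
              rw [Finset.mul_sum]
          _ ≤ ((n : ℝ) / ((k : ℝ) * ((n - k : ℕ) : ℝ))) ^ p * C ^ t := by
              apply mul_le_mul_of_nonneg_left (ih (n - k)) (by positivity)
    calc ∑ k ∈ Finset.Icc 1 n, ∑ b ∈ compositions (n-k) (t+1),
          ((n : ℝ) / ∏ j, ((Fin.cons k b : Fin (t+2) → ℕ) j : ℝ)) ^ p
        ≤ ∑ k ∈ Finset.Icc 1 n,
            ((n : ℝ) / ((k : ℝ) * ((n - k : ℕ) : ℝ))) ^ p * C ^ t :=
          Finset.sum_le_sum hinner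
      _ = (∑ k ∈ Finset.Icc 1 n,
            ((n : ℝ) / ((k : ℝ) * ((n - k : ℕ) : ℝ))) ^ p) * C ^ t := by
          rw [← Finset.sum_mul]
      _ ≤ C * C ^ t := by
          apply mul_le_mul_of_nonneg_right (key_sum_lt hp n).le (by positivity)
      _ = C ^ (t+1) := by ring

/-- Lemma S.14 of the paper.
For every real `p > 1` and all integers `s ≥ 2`, `n ≥ s`,
`Σ_{a∈𝓕_s(n)} (n/∏_j a_j)^p < C_p^{s−1}` where `C_p = 2^p ζ(p)`,
with `ζ(p) = Σ_{k≥1} k^{−p}`. -/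
theorem composition_power_sum_bound
    (p : ℝ) (hp : 1 < p) (s n : ℕ) (hs : 2 ≤ s) (hn : s ≤ n) :
    ∑ a ∈ compositions n s, ((n : ℝ) / ∏ j, (a j : ℝ)) ^ p
      < ((2 : ℝ) ^ p * ∑' k : ℕ, ((k : ℝ) + 1) ^ (-p)) ^ (s - 1) := by
  obtain ⟨t, rfl⟩ : ∃ t, s = t + 2 := ⟨s - 2, by omega⟩
  set ζ := ∑' k : ℕ, ((k : ℝ) + 1) ^ (-p) with hζ
  have hζpos : 0 < ζ := zeta_pos hp
  set C := (2:ℝ) ^ p * ζ with hC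
  have hCpos : 0 < C := by positivity
  have hexp : t + 2 - 1 = t + 1 := by omega
  rw [hexp]
  rw [sum_compositions_decomp]
  have hinner : ∀ k ∈ Finset.Icc 1 n,
      ∑ b ∈ compositions (n-k) (t+1),
        ((n : ℝ) / ∏ j, ((Fin.cons k b : Fin (t+2) → ℕ) j : ℝ)) ^ p
      ≤ ((n : ℝ) / ((k : ℝ) * ((n - k : ℕ) : ℝ))) ^ p * C ^ t := by
    intro k hk
    rw [Finset.mem_Icc] at hk
    rcases Nat.eq_zero_or_pos (n - k) with h0 | h0
    · rw [h0, compositions_zero_empty, Finset.sum_empty]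
      positivity
    · have hk0 : (0:ℝ) < (k:ℝ) := by exact_mod_cast hk.1
      have hm0 : (0:ℝ) < ((n - k : ℕ) : ℝ) := by exact_mod_cast h0
      calc ∑ b ∈ compositions (n-k) (t+1),
            ((n : ℝ) / ∏ j, ((Fin.cons k b : Fin (t+2) → ℕ) j : ℝ)) ^ p
          = ∑ b ∈ compositions (n-k) (t+1),
            ((n : ℝ) / ((k : ℝ) * ((n - k : ℕ) : ℝ))) ^ p
              * (((n - k : ℕ) : ℝ) / ∏ j, (b j : ℝ)) ^ p := by
            refine Finset.sum_congr rfl fun b hb => ?_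
            have hP : 0 < ∏ j, (b j : ℝ) := prod_pos_of_mem hb
            have hprod : ∏ j, ((Fin.cons k b : Fin (t+2) → ℕ) j : ℝ)
                = (k : ℝ) * ∏ j, (b j : ℝ) := by
              rw [Fin.prod_univ_succ]
              simp [Fin.cons_zero, Fin.cons_succ]
            rw [hprod, ← Real.mul_rpow (by positivity) (by positivity)]
            congr 1
            field_simp
        _ = ((n : ℝ) / ((k : ℝ) * ((n - k : ℕ) : ℝ))) ^ p
            * ∑ b ∈ compositions (n-k) (t+1),
              (((n - k : ℕ) : ℝ) / ∏ j, (b j : ℝ)) ^ p := by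
            rw [Finset.mul_sum]
        _ ≤ ((n : ℝ) / ((k : ℝ) * ((n - k : ℕ) : ℝ))) ^ p * C ^ t := by
            apply mul_le_mul_of_nonneg_left (comp_bound_aux hp t (n - k)) (by positivity)
  calc ∑ k ∈ Finset.Icc 1 n, ∑ b ∈ compositions (n-k) (t+1),
        ((n : ℝ) / ∏ j, ((Fin.cons k b : Fin (t+2) → ℕ) j : ℝ)) ^ p
      ≤ ∑ k ∈ Finset.Icc 1 n,
          ((n : ℝ) / ((k : ℝ) * ((n - k : ℕ) : ℝ))) ^ p * C ^ t :=
        Finset.sum_le_sum hinner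
    _ = (∑ k ∈ Finset.Icc 1 n,
          ((n : ℝ) / ((k : ℝ) * ((n - k : ℕ) : ℝ))) ^ p) * C ^ t := by
        rw [← Finset.sum_mul]
    _ < C * C ^ t :=
        mul_lt_mul_of_pos_right (key_sum_lt hp n) (by positivity)
    _ = C ^ (t+1) := by ring
end
end

section
/- Let c > 0 and θ* ∈ ℝ, and for x_{1:n} = (x_1,…,x_n) define the marginal likelihood m(x_{1:n}) = (2c)^{−(n+1)} ∫_ℝ ∏_{i=1}^n 𝟙_{(θ−c, θ+c)}(x_i) · 𝟙_{(θ*−c, θ*+c)}(θ) dθ (i.e., the marginal of n observations under the Uniform(θ−c, θ+c) kernel with Uniform(θ*−c, θ*+c) base density). Then for every x_{1:n} ∈ [θ*−c, θ*+c]^n, m(x_{1:n}) = (2c − (max(x_1,…,x_n,θ*) − min(x_1,…,x_n,θ*)))/(2c)^{n+1}. -/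
open MeasureTheory Set

/-!
Since `x ∈ (θ - c, θ + c)` iff `θ ∈ (x - c, x + c)`, the integrand is the indicator of
`⋂ᵢ (xᵢ - c, xᵢ + c) ∩ (θ* - c, θ* + c) = (max(x, θ*) - c, min(x, θ*) + c)`, so the integral is
the length `2c - (max - min)` of that interval; it is nonnegative because all points lie in
`[θ* - c, θ* + c]`.
-/

section Intervals

variable {α : Type*} [AddCommGroup α] [LinearOrder α] [IsOrderedAddMonoid α]

theorem mem_Ioo_sub_add_comm {x θ c : α} :
    x ∈ Ioo (θ - c) (θ + c) ↔ θ ∈ Ioo (x - c) (x + c) := by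
  simp only [mem_Ioo, sub_lt_iff_lt_add]
  exact and_comm

theorem indicator_Ioo_sub_add_comm {M : Type*} [One M] [Zero M] (x θ c : α) :
    (Ioo (θ - c) (θ + c)).indicator (1 : α → M) x = (Ioo (x - c) (x + c)).indicator 1 θ := by
  simp only [indicator_apply, mem_Ioo_sub_add_comm, Pi.one_apply]

theorem biInter_Ioo_sub_add {ι : Type*} (s : Finset ι) (hs : s.Nonempty) (x : ι → α) (c : α) :
    ⋂ i ∈ s, Ioo (x i - c) (x i + c) = Ioo (s.sup' hs x - c) (s.inf' hs x + c) := by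
  ext θ
  simp only [mem_iInter, mem_Ioo, forall_and, sub_lt_iff_lt_add, Finset.sup'_lt_iff]
  simp only [← sub_lt_iff_lt_add, Finset.lt_inf'_iff]

theorem prod_indicator_Ioo_mul_indicator_Ioo {R ι : Type*} [CommSemiring R] (s : Finset ι)
    (hs : s.Nonempty) (x : ι → α) (c θstar θ : α) :
    (∏ i ∈ s, (Ioo (θ - c) (θ + c)).indicator 1 (x i)) *
        (Ioo (θstar - c) (θstar + c)).indicator 1 θ =
      (Ioo (max (s.sup' hs x) θstar - c) (min (s.inf' hs x) θstar + c)).indicator (1 : α → R) θ := by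
  rw [Finset.prod_congr rfl fun i _ => indicator_Ioo_sub_add_comm (x i) θ c,
    prod_indicator_const_apply, one_pow, ← Pi.mul_apply, ← inter_indicator_one,
    biInter_Ioo_sub_add s hs, Ioo_inter_Ioo, max_sub_sub_right, min_add_add_right]

end Intervals

theorem uniform_marginal_likelihood_general
    (c θstar : ℝ) (n : ℕ) (hn : 1 ≤ n) (x : Fin n → ℝ)
    (hx : ∀ i, x i ∈ Set.Icc (θstar - c) (θstar + c)) :
    ((2 * c) ^ (n + 1))⁻¹ *
        ∫ θ : ℝ, (∏ i, Set.indicator (Set.Ioo (θ - c) (θ + c)) (fun _ => (1:ℝ)) (x i)) *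
          Set.indicator (Set.Ioo (θstar - c) (θstar + c)) (fun _ => (1:ℝ)) θ
      = (2 * c -
          (max (Finset.univ.sup' (Finset.univ_nonempty_iff.mpr
              (Fin.pos_iff_nonempty.mp hn)) x) θstar -
           min (Finset.univ.inf' (Finset.univ_nonempty_iff.mpr
              (Fin.pos_iff_nonempty.mp hn)) x) θstar)) / (2 * c) ^ (n + 1) := by
  set hs := Finset.univ_nonempty_iff.mpr (Fin.pos_iff_nonempty.mp hn)
  have hlen : max (Finset.univ.sup' hs x) θstar - c ≤ min (Finset.univ.inf' hs x) θstar + c := by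
    have hc : 0 ≤ c := by linarith [(hx hs.choose).1, (hx hs.choose).2]
    have hmax := max_le (Finset.sup'_le hs x fun i _ => (hx i).2) (by linarith : θstar ≤ θstar + c)
    have hmin := le_min (Finset.le_inf' hs x fun i _ => (hx i).1) (by linarith : θstar - c ≤ θstar)
    linarith
  simp only [← Pi.one_def, prod_indicator_Ioo_mul_indicator_Ioo _ hs]
  rw [integral_indicator_one measurableSet_Ioo, Real.volume_real_Ioo_of_le hlen, inv_mul_eq_div]
  congr 1
  ring

/-- Lemma S.15 of the paper.
The marginal likelihood of `n` observations under the `Unif(θ−c,θ+c)` kernel with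
`Unif(θ*−c,θ*+c)` base density: for `x_{1:n} ∈ [θ*−c, θ*+c]^n`,
`m(x_{1:n}) = (2c − (max(x_{1:n},θ*) − min(x_{1:n},θ*)))/(2c)^{n+1}`. -/
theorem uniform_marginal_likelihood
    (c θstar : ℝ) (hc : 0 < c) (n : ℕ) (hn : 1 ≤ n) (x : Fin n → ℝ)
    (hx : ∀ i, x i ∈ Set.Icc (θstar - c) (θstar + c)) :
    ((2 * c) ^ (n + 1))⁻¹ *
        ∫ θ : ℝ, (∏ i, Set.indicator (Set.Ioo (θ - c) (θ + c)) (fun _ => (1:ℝ)) (x i)) *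
          Set.indicator (Set.Ioo (θstar - c) (θstar + c)) (fun _ => (1:ℝ)) θ
      = (2 * c -
          (max (Finset.univ.sup' (Finset.univ_nonempty_iff.mpr
              (Fin.pos_iff_nonempty.mp hn)) x) θstar -
           min (Finset.univ.inf' (Finset.univ_nonempty_iff.mpr
              (Fin.pos_iff_nonempty.mp hn)) x) θstar)) / (2 * c) ^ (n + 1) :=
  uniform_marginal_likelihood_general c θstar n hn x hx
end
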